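/- arXiv:math/9905096 — 6 statements merged into one kernel-verified Lean document; each statement's English description precedes it below -/
import Mathlib

section
/- Let (g,R,P,S) be an admissible quadruple for the differential problem in ℝⁿ on [a,b]. (i) If t₀ ∈ (a,b] is a (P,S)-focal instant and the restriction of g to the subspace 𝕁[t₀] = {J(t₀) : J ∈ 𝕁} is nondegenerate, then there exists δ > 0 such that no instant t ∈ (a,b] with 0 < |t − t₀| < δ is (P,S)-focal. (ii) There exists ε > 0 such that no instant t ∈ (a, a+ε] is (P,S)-focal. -/
open Set

/-- The `g`-orthogonal complement of `P` in `ℝⁿ`. -/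
def gOrtho {n : ℕ} (g : (Fin n → ℝ) →ₗ[ℝ] (Fin n → ℝ) →ₗ[ℝ] ℝ)
    (P : Submodule ℝ (Fin n → ℝ)) : Set (Fin n → ℝ) :=
  {x | ∀ p ∈ P, g x p = 0}

/-- A `(P,S)`-solution: a `C²` map `J : [a,b] → ℝⁿ` with `J'' = R(t) J` on `[a,b]`,
`J(a) ∈ P` and `J'(a) + S[J(a)] ∈ P^⊥`. -/
def IsPSSolution {n : ℕ} (g : (Fin n → ℝ) →ₗ[ℝ] (Fin n → ℝ) →ₗ[ℝ] ℝ)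
    (R : ℝ → (Fin n → ℝ) →L[ℝ] (Fin n → ℝ))
    (P : Submodule ℝ (Fin n → ℝ)) (S : (Fin n → ℝ) →ₗ[ℝ] (Fin n → ℝ))
    (a b : ℝ) (J : ℝ → Fin n → ℝ) : Prop :=
  ContDiffOn ℝ 2 J (Icc a b) ∧
  (∀ t ∈ Icc a b, derivWithin (derivWithin J (Icc a b)) (Icc a b) t = R t (J t)) ∧
  J a ∈ P ∧ (derivWithin J (Icc a b) a + S (J a)) ∈ gOrtho g P

/-- `t` is a `(P,S)`-focal instant: some nonzero `(P,S)`-solution vanishes at `t`. -/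
def IsFocal {n : ℕ} (g : (Fin n → ℝ) →ₗ[ℝ] (Fin n → ℝ) →ₗ[ℝ] ℝ)
    (R : ℝ → (Fin n → ℝ) →L[ℝ] (Fin n → ℝ))
    (P : Submodule ℝ (Fin n → ℝ)) (S : (Fin n → ℝ) →ₗ[ℝ] (Fin n → ℝ))
    (a b : ℝ) (t : ℝ) : Prop :=
  ∃ J : ℝ → Fin n → ℝ, IsPSSolution g R P S a b J ∧ (∃ s ∈ Icc a b, J s ≠ 0) ∧ J t = 0

/-- `𝕁[t] = {J(t) : J a (P,S)-solution}`. -/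
def solSpace {n : ℕ} (g : (Fin n → ℝ) →ₗ[ℝ] (Fin n → ℝ) →ₗ[ℝ] ℝ)
    (R : ℝ → (Fin n → ℝ) →L[ℝ] (Fin n → ℝ))
    (P : Submodule ℝ (Fin n → ℝ)) (S : (Fin n → ℝ) →ₗ[ℝ] (Fin n → ℝ))
    (a b : ℝ) (t : ℝ) : Set (Fin n → ℝ) :=
  {v | ∃ J : ℝ → Fin n → ℝ, IsPSSolution g R P S a b J ∧ J t = v}

/-!
Solutions of `J'' = R J` are determined by their phase `(J, J')` at `a`, and by Grönwall the phase
at any later time depends Lipschitz-continuously on the initial one. If focal instants `τ k ≠ t₀`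
accumulate at `t₀`, normalise solutions `J k` vanishing at `τ k` to unit initial phase and extract
a limit solution `L`; this is possible because the initial phases of `(P,S)`-solutions form a
closed subspace. Then `L(t₀) = 0`, so `L'(t₀) ≠ 0` by uniqueness, and the Taylor estimate
`J k (t₀) + (τ k - t₀) • (J k)'(t₀) = O((τ k - t₀)²)` exhibits `L'(t₀)` as a limit of elements of
`𝕁[t₀]`. For `t₀ ∈ (a,b]`, the Wronskian `g(J', K) - g(J, K')` vanishes on `(P,S)`-solutions, so
`L'(t₀)` is also `g`-orthogonal to `𝕁[t₀]`, against nondegeneracy. For `t₀ = a`, `𝕁[a] ⊆ P` while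
`L(a) = 0` puts `L'(a)` in `P^⊥`, against nondegeneracy of `g` on `P`.
-/
open Filter Topology NNReal Real

section LinearODE

variable {E : Type*} [NormedAddCommGroup E] [NormedSpace ℝ E]
  {R : ℝ → E →L[ℝ] E} {a b t t₀ : ℝ} {J K : ℝ → E}

theorem norm_sub_sub_smul_le_of_hasDerivWithinAt {f f' f'' : ℝ → E} {M x y : ℝ}
    (hf : ∀ t ∈ Icc a b, HasDerivWithinAt f (f' t) (Icc a b) t)
    (hf' : ∀ t ∈ Icc a b, HasDerivWithinAt f' (f'' t) (Icc a b) t)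
    (hM : ∀ t ∈ Icc a b, ‖f'' t‖ ≤ M) (hx : x ∈ Icc a b) (hy : y ∈ Icc a b) :
    ‖f y - f x - (y - x) • f' x‖ ≤ M * (y - x) ^ 2 := by
  have hM₀ : 0 ≤ M := (norm_nonneg _).trans (hM x hx)
  have hsub : uIcc x y ⊆ Icc a b := uIcc_subset_Icc hx hy
  have hf'_lip : ∀ t ∈ uIcc x y, ‖f' t - f' x‖ ≤ M * |y - x| := fun t ht =>
    calc ‖f' t - f' x‖ ≤ M * ‖t - x‖ :=
          (convex_Icc a b).norm_image_sub_le_of_norm_hasDerivWithin_le hf' hM hx (hsub ht)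
      _ ≤ M * |y - x| := by gcongr; exact abs_sub_left_of_mem_uIcc ht
  have hderiv : ∀ t ∈ uIcc x y,
      HasDerivWithinAt (fun s => f s - s • f' x) (f' t - f' x) (uIcc x y) t := fun t ht =>
    ((hf t (hsub ht)).mono hsub).sub (by simpa using (hasDerivWithinAt_id t _).smul_const (f' x))
  have := convex_uIcc x y |>.norm_image_sub_le_of_norm_hasDerivWithin_le hderiv hf'_lip
    left_mem_uIcc right_mem_uIcc
  calc ‖f y - f x - (y - x) • f' x‖ = ‖f y - y • f' x - (f x - x • f' x)‖ := by
        rw [sub_smul]; congr 1; abel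
    _ ≤ M * |y - x| * ‖y - x‖ := this
    _ = M * (y - x) ^ 2 := by rw [Real.norm_eq_abs, mul_assoc, abs_mul_abs_self, sq]

theorem tendsto_neg_inv_smul_of_norm_add_smul_le {ι : Type*} {l : Filter ι} {x y : ι → E}
    {s : ι → ℝ} {w : E} {M : ℝ}
    (hs : Tendsto s l (𝓝 0)) (hs₀ : ∀ k, s k ≠ 0) (hy : Tendsto y l (𝓝 w))
    (hxy : ∀ k, ‖x k + s k • y k‖ ≤ M * s k ^ 2) :
    Tendsto (fun k => -(s k)⁻¹ • x k) l (𝓝 w) := by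
  have hbound : ∀ k, ‖-(s k)⁻¹ • x k - y k‖ ≤ M * |s k| := fun k => by
    have : -(s k)⁻¹ • x k - y k = -((s k)⁻¹ • (x k + s k • y k)) := by
      rw [smul_add, smul_smul, inv_mul_cancel₀ (hs₀ k), one_smul, neg_smul, neg_add]; abel
    rw [this, norm_neg, norm_smul, norm_inv, Real.norm_eq_abs,
      inv_mul_le_iff₀ (abs_pos.2 (hs₀ k))]
    calc _ ≤ M * s k ^ 2 := hxy k
      _ = |s k| * (M * |s k|) := by rw [← sq_abs]; ring
  have := squeeze_zero_norm hbound (by simpa using hs.abs.const_mul M)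
  simpa using this.add hy

def SolvesLinearODE (R : ℝ → E →L[ℝ] E) (a b : ℝ) (J : ℝ → E) : Prop :=
  ContDiffOn ℝ 2 J (Icc a b) ∧
  ∀ t ∈ Icc a b, derivWithin (derivWithin J (Icc a b)) (Icc a b) t = R t (J t)

noncomputable def phase (a b : ℝ) (J : ℝ → E) (t : ℝ) : E × E :=
  (J t, derivWithin J (Icc a b) t)

def phaseField (R : ℝ → E →L[ℝ] E) (t : ℝ) (p : E × E) : E × E :=
  (p.2, R t p.1)

theorem lipschitzWith_phaseField {C : ℝ≥0} (hC : ‖R t‖₊ ≤ C) :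
    LipschitzWith (max 1 C) (phaseField R t) :=
  LipschitzWith.prod_snd.prodMk (((R t).lipschitz.weaken hC).comp LipschitzWith.prod_fst
    |>.weaken (by rw [mul_one]))

theorem solvesLinearODE_zero : SolvesLinearODE R a b 0 :=
  ⟨contDiffOn_const, fun t _ => by simp [derivWithin_zero]⟩

theorem phase_zero : phase a b (0 : ℝ → E) t = 0 := by
  simp [phase]

namespace SolvesLinearODE

theorem hasDerivWithinAt (hJ : SolvesLinearODE R a b J) (ht : t ∈ Icc a b) :
    HasDerivWithinAt J (derivWithin J (Icc a b) t) (Icc a b) t :=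
  ((hJ.1.differentiableOn two_ne_zero) t ht).hasDerivWithinAt

theorem hasDerivWithinAt_derivWithin (hab : a < b) (hJ : SolvesLinearODE R a b J)
    (ht : t ∈ Icc a b) :
    HasDerivWithinAt (derivWithin J (Icc a b)) (R t (J t)) (Icc a b) t := by
  rw [← hJ.2 t ht]
  exact ((hJ.1.derivWithin (uniqueDiffOn_Icc hab) le_rfl).differentiableOn one_ne_zero t ht
    ).hasDerivWithinAt

theorem hasDerivWithinAt_phase (hab : a < b) (hJ : SolvesLinearODE R a b J)
    (ht : t ∈ Icc a b) :
    HasDerivWithinAt (phase a b J) (phaseField R t (phase a b J t)) (Icc a b) t :=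
  (hJ.hasDerivWithinAt ht).prodMk (hJ.hasDerivWithinAt_derivWithin hab ht)

theorem continuousOn_phase (hab : a < b) (hJ : SolvesLinearODE R a b J) :
    ContinuousOn (phase a b J) (Icc a b) :=
  fun _ ht => (hJ.hasDerivWithinAt_phase hab ht).continuousWithinAt

theorem dist_phase_le (hab : a < b) {C : ℝ≥0} (hC : ∀ t ∈ Icc a b, ‖R t‖₊ ≤ C)
    (hJ : SolvesLinearODE R a b J) (hK : SolvesLinearODE R a b K) (ht : t ∈ Icc a b) :
    dist (phase a b J t) (phase a b K t)
      ≤ dist (phase a b J a) (phase a b K a) * exp (max 1 C * (b - a)) := by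
  have hderiv {L : ℝ → E} (hL : SolvesLinearODE R a b L) (s : ℝ) (hs : s ∈ Ico a b) :=
    (hL.hasDerivWithinAt_phase hab (Ico_subset_Icc_self hs)).mono_of_mem_nhdsWithin
      (Icc_mem_nhdsGE_of_mem hs)
  refine (dist_le_of_trajectories_ODE_of_mem (s := fun _ => univ)
    (fun s hs => (lipschitzWith_phaseField (hC s (Ico_subset_Icc_self hs))).lipschitzOnWith)
    (hJ.continuousOn_phase hab) (hderiv hJ) (fun _ _ => trivial)
    (hK.continuousOn_phase hab) (hderiv hK) (fun _ _ => trivial) le_rfl t ht).trans ?_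
  gcongr
  exact ht.2

theorem phase_add (hJ : SolvesLinearODE R a b J) (hK : SolvesLinearODE R a b K)
    (ht : t ∈ Icc a b) : phase a b (J + K) t = phase a b J t + phase a b K t :=
  Prod.ext rfl (derivWithin_add (hJ.hasDerivWithinAt ht).differentiableWithinAt
    (hK.hasDerivWithinAt ht).differentiableWithinAt)

theorem phase_smul (c : ℝ) (hJ : SolvesLinearODE R a b J) (ht : t ∈ Icc a b) :
    phase a b (c • J) t = c • phase a b J t :=
  Prod.ext rfl (derivWithin_const_smul c (hJ.hasDerivWithinAt ht).differentiableWithinAt)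

theorem add (hab : a < b) (hJ : SolvesLinearODE R a b J) (hK : SolvesLinearODE R a b K) :
    SolvesLinearODE R a b (J + K) := by
  refine ⟨hJ.1.add hK.1, fun t ht => ?_⟩
  have hderiv : EqOn (derivWithin (J + K) (Icc a b))
      (derivWithin J (Icc a b) + derivWithin K (Icc a b)) (Icc a b) :=
    fun s hs => congrArg Prod.snd (phase_add hJ hK hs)
  rw [derivWithin_congr hderiv (hderiv ht),
    ((hJ.hasDerivWithinAt_derivWithin hab ht).add
      (hK.hasDerivWithinAt_derivWithin hab ht)).derivWithin (uniqueDiffOn_Icc hab t ht)]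
  simp

theorem smul (hab : a < b) (c : ℝ) (hJ : SolvesLinearODE R a b J) :
    SolvesLinearODE R a b (c • J) := by
  refine ⟨hJ.1.const_smul c, fun t ht => ?_⟩
  have hderiv : EqOn (derivWithin (c • J) (Icc a b)) (c • derivWithin J (Icc a b)) (Icc a b) :=
    fun s hs => congrArg Prod.snd (phase_smul c hJ hs)
  rw [derivWithin_congr hderiv (hderiv ht),
    ((hJ.hasDerivWithinAt_derivWithin hab ht).const_smul c).derivWithin
      (uniqueDiffOn_Icc hab t ht)]
  simp

theorem norm_phase_le (hab : a < b) {C : ℝ≥0} (hC : ∀ t ∈ Icc a b, ‖R t‖₊ ≤ C)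
    (hJ : SolvesLinearODE R a b J) (ht : t ∈ Icc a b) :
    ‖phase a b J t‖ ≤ ‖phase a b J a‖ * exp (max 1 C * (b - a)) := by
  simpa [phase_zero] using hJ.dist_phase_le hab hC solvesLinearODE_zero ht

theorem phase_left_eq_zero (hab : a < b) {C : ℝ≥0} (hC : ∀ t ∈ Icc a b, ‖R t‖₊ ≤ C)
    (hJ : SolvesLinearODE R a b J) (ht₀ : t₀ ∈ Icc a b) (h₀ : phase a b J t₀ = 0) :
    phase a b J a = 0 := by
  have hderiv {L : ℝ → E} (hL : SolvesLinearODE R a b L) (s : ℝ) (hs : s ∈ Ioc a t₀) :=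
    (hL.hasDerivWithinAt_phase hab ⟨hs.1.le, hs.2.trans ht₀.2⟩).mono_of_mem_nhdsWithin
      (Icc_mem_nhdsLE_of_mem ⟨hs.1, hs.2.trans ht₀.2⟩)
  have hcont {L : ℝ → E} (hL : SolvesLinearODE R a b L) :=
    (hL.continuousOn_phase hab).mono (Icc_subset_Icc_right ht₀.2)
  simpa [phase_zero] using ODE_solution_unique_of_mem_Icc_left (s := fun _ => univ)
    (fun s hs => (lipschitzWith_phaseField (hC s ⟨hs.1.le, hs.2.trans ht₀.2⟩)).lipschitzOnWith)
    (hcont hJ) (hderiv hJ) (fun _ _ => trivial)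
    (hcont solvesLinearODE_zero) (hderiv solvesLinearODE_zero) (fun _ _ => trivial)
    (by rw [h₀, phase_zero]) (left_mem_Icc.2 ht₀.1)

theorem norm_sub_sub_smul_le (hab : a < b) {C : ℝ≥0}
    (hC : ∀ t ∈ Icc a b, ‖R t‖₊ ≤ C) (hJ : SolvesLinearODE R a b J)
    (ht₀ : t₀ ∈ Icc a b) (ht : t ∈ Icc a b) :
    ‖J t - J t₀ - (t - t₀) • derivWithin J (Icc a b) t₀‖
      ≤ C * (‖phase a b J a‖ * exp (max 1 C * (b - a))) * (t - t₀) ^ 2 := by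
  refine norm_sub_sub_smul_le_of_hasDerivWithinAt (fun s hs => hJ.hasDerivWithinAt hs)
    (fun s hs => hJ.hasDerivWithinAt_derivWithin hab hs) (fun s hs => ?_) ht₀ ht
  calc ‖R s (J s)‖ ≤ ‖R s‖ * ‖J s‖ := (R s).le_opNorm _
    _ ≤ C * ‖phase a b J s‖ := by
        gcongr
        · exact_mod_cast hC s hs
        · exact norm_fst_le (phase a b J s)
    _ ≤ C * (‖phase a b J a‖ * exp (max 1 C * (b - a))) := by
        gcongr; exact hJ.norm_phase_le hab hC hs

theorem wronskian_eq [FiniteDimensional ℝ E] {g : E →ₗ[ℝ] E →ₗ[ℝ] ℝ}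
    (hab : a < b) (hRsymm : ∀ t ∈ Icc a b, ∀ x y, g (R t x) y = g x (R t y))
    (hJ : SolvesLinearODE R a b J) (hK : SolvesLinearODE R a b K) (ht : t ∈ Icc a b) :
    g (derivWithin J (Icc a b) t) (K t) - g (J t) (derivWithin K (Icc a b) t)
      = g (derivWithin J (Icc a b) a) (K a) - g (J a) (derivWithin K (Icc a b) a) := by
  set B := g.toContinuousBilinearMap
  have hderiv : ∀ s ∈ Icc a b, HasDerivWithinAt
      (fun s => B (derivWithin J (Icc a b) s) (K s) - B (J s) (derivWithin K (Icc a b) s))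
      0 (Icc a b) s := fun s hs => by
    refine ((B.hasDerivWithinAt_of_bilinear (hJ.hasDerivWithinAt_derivWithin hab hs)
      (hK.hasDerivWithinAt hs)).sub
      (B.hasDerivWithinAt_of_bilinear (hJ.hasDerivWithinAt hs)
        (hK.hasDerivWithinAt_derivWithin hab hs))).congr_deriv ?_
    simp only [B, LinearMap.toContinuousBilinearMap_apply, hRsymm s hs]
    ring
  simpa [B, sub_eq_zero] using (convex_Icc a b).norm_image_sub_le_of_norm_hasDerivWithin_le
    hderiv (fun _ _ => norm_zero.le) (left_mem_Icc.2 hab.le) ht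

end SolvesLinearODE

end LinearODE

section PSSolutions

variable {n : ℕ} {g : (Fin n → ℝ) →ₗ[ℝ] (Fin n → ℝ) →ₗ[ℝ] ℝ}
  {R : ℝ → (Fin n → ℝ) →L[ℝ] (Fin n → ℝ)}
  {P : Submodule ℝ (Fin n → ℝ)} {S : (Fin n → ℝ) →ₗ[ℝ] (Fin n → ℝ)}
  {a b t t₀ : ℝ} {J K : ℝ → Fin n → ℝ}

namespace IsPSSolution

theorem solvesLinearODE (hJ : IsPSSolution g R P S a b J) : SolvesLinearODE R a b J :=
  ⟨hJ.1, hJ.2.1⟩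

theorem add (hab : a < b) (hJ : IsPSSolution g R P S a b J) (hK : IsPSSolution g R P S a b K) :
    IsPSSolution g R P S a b (J + K) := by
  obtain ⟨hsol, hsol'⟩ := hJ.solvesLinearODE.add hab hK.solvesLinearODE
  refine ⟨hsol, hsol', P.add_mem hJ.2.2.1 hK.2.2.1, fun p hp => ?_⟩
  have hderiv := congrArg Prod.snd
    (hJ.solvesLinearODE.phase_add hK.solvesLinearODE (left_mem_Icc.2 hab.le))
  simp only [phase, Prod.snd_add] at hderiv
  have hJp := hJ.2.2.2 p hp
  have hKp := hK.2.2.2 p hp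
  simp only [hderiv, Pi.add_apply, map_add, LinearMap.add_apply] at hJp hKp ⊢
  linear_combination hJp + hKp

theorem smul (hab : a < b) (c : ℝ) (hJ : IsPSSolution g R P S a b J) :
    IsPSSolution g R P S a b (c • J) := by
  obtain ⟨hsol, hsol'⟩ := hJ.solvesLinearODE.smul hab c
  refine ⟨hsol, hsol', P.smul_mem c hJ.2.2.1, fun p hp => ?_⟩
  have hderiv := congrArg Prod.snd (hJ.solvesLinearODE.phase_smul c (left_mem_Icc.2 hab.le))
  simp only [phase, Prod.smul_snd] at hderiv
  have hJp := hJ.2.2.2 p hp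
  simp only [hderiv, Pi.smul_apply, map_add, map_smul, LinearMap.add_apply,
    LinearMap.smul_apply, smul_eq_mul] at hJp ⊢
  linear_combination c * hJp

theorem wronskian_eq_zero (hab : a < b)
    (hgsymm : ∀ x y, g x y = g y x)
    (hRsymm : ∀ t ∈ Icc a b, ∀ x y, g (R t x) y = g x (R t y))
    (hSsymm : ∀ x ∈ P, ∀ y ∈ P, g (S x) y = g x (S y))
    (hJ : IsPSSolution g R P S a b J) (hK : IsPSSolution g R P S a b K) (ht : t ∈ Icc a b) :
    g (derivWithin J (Icc a b) t) (K t) = g (J t) (derivWithin K (Icc a b) t) := by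
  rw [← sub_eq_zero, hJ.solvesLinearODE.wronskian_eq hab hRsymm hK.solvesLinearODE ht]
  have hJa := hJ.2.2.2 (K a) hK.2.2.1
  have hKa := hK.2.2.2 (J a) hJ.2.2.1
  simp only [map_add, LinearMap.add_apply] at hJa hKa
  linear_combination hJa - hKa - hgsymm (J a) (derivWithin K (Icc a b) a)
    - hSsymm (J a) hJ.2.2.1 (K a) hK.2.2.1 - hgsymm (J a) (S (K a))

end IsPSSolution

theorem isPSSolution_zero : IsPSSolution g R P S a b 0 :=
  ⟨(solvesLinearODE_zero (R := R)).1, solvesLinearODE_zero.2, P.zero_mem, fun p _ => by simp⟩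

variable (g R P S) in
def psSolutions (hab : a < b) : Submodule ℝ (ℝ → Fin n → ℝ) where
  carrier := {J | IsPSSolution g R P S a b J}
  zero_mem' := isPSSolution_zero
  add_mem' := IsPSSolution.add hab
  smul_mem' c _ hJ := hJ.smul hab c

theorem isClosed_solSpace (hab : a < b) (t : ℝ) : IsClosed (solSpace g R P S a b t) := by
  convert ((psSolutions g R P S hab).map (LinearMap.proj t)).closed_of_finiteDimensional
  ext v
  simp [solSpace, psSolutions]

variable (g R P S) in
noncomputable def initialPhase (hab : a < b) :
    psSolutions g R P S hab →ₗ[ℝ] (Fin n → ℝ) × (Fin n → ℝ) where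
  toFun J := phase a b J a
  map_add' J K := J.2.solvesLinearODE.phase_add K.2.solvesLinearODE (left_mem_Icc.2 hab.le)
  map_smul' c J := J.2.solvesLinearODE.phase_smul c (left_mem_Icc.2 hab.le)

theorem IsFocal.exists_norm_phase_eq_one (hab : a < b) {C : ℝ≥0}
    (hC : ∀ t ∈ Icc a b, ‖R t‖₊ ≤ C) (hfocal : IsFocal g R P S a b t) :
    ∃ J, IsPSSolution g R P S a b J ∧ J t = 0 ∧ ‖phase a b J a‖ = 1 := by
  obtain ⟨J, hJ, ⟨s, hs, hJs⟩, hJt⟩ := hfocal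
  have hphase : phase a b J a ≠ 0 := fun h => hJs <| by
    have := hJ.solvesLinearODE.norm_phase_le hab hC hs
    rw [h, norm_zero, zero_mul, norm_le_zero_iff] at this
    exact congrArg Prod.fst this
  refine ⟨‖phase a b J a‖⁻¹ • J, hJ.smul hab _, by simp [hJt], ?_⟩
  rw [hJ.solvesLinearODE.phase_smul _ (left_mem_Icc.2 hab.le), norm_smul, norm_inv, norm_norm,
    inv_mul_cancel₀ (norm_ne_zero_iff.2 hphase)]

theorem exists_subseq_tendsto_phase (hab : a < b) {C : ℝ≥0}
    (hC : ∀ t ∈ Icc a b, ‖R t‖₊ ≤ C) {J : ℕ → ℝ → Fin n → ℝ}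
    (hJ : ∀ k, IsPSSolution g R P S a b (J k)) (hJ₁ : ∀ k, ‖phase a b (J k) a‖ = 1) :
    ∃ L, IsPSSolution g R P S a b L ∧ ‖phase a b L a‖ = 1 ∧ ∃ φ : ℕ → ℕ, StrictMono φ ∧
      ∀ t ∈ Icc a b, Tendsto (fun k => phase a b (J (φ k)) t) atTop (𝓝 (phase a b L t)) := by
  obtain ⟨v, -, φ, hφ, hv⟩ := tendsto_subseq_of_bounded (Metric.isBounded_closedBall (x := 0))
    fun k => mem_closedBall_zero_iff.2 (hJ₁ k).le
  obtain ⟨⟨L, hL⟩, rfl⟩ : v ∈ LinearMap.range (initialPhase g R P S hab) :=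
    (Submodule.closed_of_finiteDimensional _).mem_of_tendsto hv
      (Eventually.of_forall fun k => ⟨⟨J (φ k), hJ (φ k)⟩, rfl⟩)
  change Tendsto _ atTop (𝓝 (phase a b L a)) at hv
  refine ⟨L, hL, tendsto_nhds_unique hv.norm (by simp [hJ₁]), φ, hφ, fun t ht => ?_⟩
  refine tendsto_iff_dist_tendsto_zero.2 <| squeeze_zero (fun _ => dist_nonneg)
    (fun k => (hJ (φ k)).solvesLinearODE.dist_phase_le hab hC hL.solvesLinearODE ht) ?_
  simpa using (tendsto_iff_dist_tendsto_zero.1 hv).mul_const (exp (max 1 C * (b - a)))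

theorem exists_isPSSolution_of_tendsto_isFocal (hab : a < b) {C : ℝ≥0}
    (hC : ∀ t ∈ Icc a b, ‖R t‖₊ ≤ C) (ht₀ : t₀ ∈ Icc a b) {τ : ℕ → ℝ}
    (hτ : Tendsto τ atTop (𝓝 t₀)) (hτ_mem : ∀ k, τ k ∈ Icc a b) (hτ_ne : ∀ k, τ k ≠ t₀)
    (hτ_focal : ∀ k, IsFocal g R P S a b (τ k)) :
    ∃ L, IsPSSolution g R P S a b L ∧ L t₀ = 0 ∧ derivWithin L (Icc a b) t₀ ≠ 0 ∧
      derivWithin L (Icc a b) t₀ ∈ solSpace g R P S a b t₀ := by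
  choose J hJ hJτ hJ₁ using fun k => (hτ_focal k).exists_norm_phase_eq_one hab hC
  obtain ⟨L, hL, hL₁, φ, hφ, hconv⟩ := exists_subseq_tendsto_phase hab hC hJ hJ₁
  set s := fun k => τ (φ k) - t₀
  have hs : Tendsto s atTop (𝓝 0) := by
    simpa using (hτ.comp hφ.tendsto_atTop).sub_const t₀
  have hs₀ : ∀ k, s k ≠ 0 := fun k => sub_ne_zero.2 (hτ_ne (φ k))
  have hval : Tendsto (fun k => J (φ k) t₀) atTop (𝓝 (L t₀)) :=
    (continuous_fst.tendsto _).comp (hconv t₀ ht₀)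
  have hderiv : Tendsto (fun k => derivWithin (J (φ k)) (Icc a b) t₀) atTop
      (𝓝 (derivWithin L (Icc a b) t₀)) :=
    (continuous_snd.tendsto _).comp (hconv t₀ ht₀)
  have htaylor : ∀ k, ‖J (φ k) t₀ + s k • derivWithin (J (φ k)) (Icc a b) t₀‖
      ≤ C * exp (max 1 C * (b - a)) * s k ^ 2 := fun k => by
    have := (hJ (φ k)).solvesLinearODE.norm_sub_sub_smul_le hab hC ht₀ (hτ_mem (φ k))
    rwa [hJτ, hJ₁, one_mul, zero_sub, ← neg_add', norm_neg] at this
  -- the difference quotients `-(s k)⁻¹ • J (φ k) t₀` lie in `𝕁[t₀]` and tend to `L'(t₀)`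
  have hquot := tendsto_neg_inv_smul_of_norm_add_smul_le hs hs₀ hderiv htaylor
  have hL₀ : L t₀ = 0 := tendsto_nhds_unique hval <| by
    simpa [smul_smul, hs₀] using hs.neg.smul hquot
  refine ⟨L, hL, hL₀, fun h => ?_, (isClosed_solSpace hab t₀).mem_of_tendsto hquot
    (Eventually.of_forall fun k => ⟨_, (hJ (φ k)).smul hab _, rfl⟩)⟩
  have := hL.solvesLinearODE.phase_left_eq_zero hab hC ht₀ (Prod.ext hL₀ h)
  simp [this] at hL₁

theorem exists_pos_forall_not_isFocal (hab : a < b) (hRcont : ContinuousOn R (Icc a b))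
    (ht₀ : t₀ ∈ Icc a b)
    (hkernel : ∀ L, IsPSSolution g R P S a b L → L t₀ = 0 →
      derivWithin L (Icc a b) t₀ ∈ solSpace g R P S a b t₀ → derivWithin L (Icc a b) t₀ = 0) :
    ∃ δ > 0, ∀ t ∈ Icc a b, t ≠ t₀ → |t - t₀| < δ → ¬ IsFocal g R P S a b t := by
  obtain ⟨C, hC⟩ : ∃ C : ℝ≥0, ∀ t ∈ Icc a b, ‖R t‖₊ ≤ C := by
    obtain ⟨C, hC⟩ := isCompact_Icc.exists_bound_of_continuousOn hRcont
    exact ⟨C.toNNReal, fun t ht => by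
      rw [← NNReal.coe_le_coe, coe_nnnorm]; exact (hC t ht).trans (Real.le_coe_toNNReal C)⟩
  by_contra! hfocal
  choose τ hτ_mem hτ_ne hτ_near hτ_focal using
    fun k : ℕ => hfocal (1 / (k + 1)) Nat.one_div_pos_of_nat
  have hτ : Tendsto τ atTop (𝓝 t₀) := tendsto_iff_dist_tendsto_zero.2 <|
    squeeze_zero (fun _ => dist_nonneg) (fun k => (Real.dist_eq _ _).trans_le (hτ_near k).le)
      tendsto_one_div_add_atTop_nhds_zero_nat
  obtain ⟨L, hL, hL₀, hne, hmem⟩ :=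
    exists_isPSSolution_of_tendsto_isFocal hab hC ht₀ hτ hτ_mem hτ_ne hτ_focal
  exact hne (hkernel L hL hL₀ hmem)

end PSSolutions

theorem focal_instants_isolated_general {n : ℕ}
    (g : (Fin n → ℝ) →ₗ[ℝ] (Fin n → ℝ) →ₗ[ℝ] ℝ)
    (R : ℝ → (Fin n → ℝ) →L[ℝ] (Fin n → ℝ))
    (P : Submodule ℝ (Fin n → ℝ)) (S : (Fin n → ℝ) →ₗ[ℝ] (Fin n → ℝ))
    (a b : ℝ) (hab : a < b)
    (hgsymm : ∀ x y, g x y = g y x)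
    (hRcont : ContinuousOn R (Icc a b))
    (hRsymm : ∀ t ∈ Icc a b, ∀ x y, g (R t x) y = g x (R t y))
    (hPnd : ∀ x ∈ P, (∀ y ∈ P, g x y = 0) → x = 0)
    (hSsymm : ∀ x ∈ P, ∀ y ∈ P, g (S x) y = g x (S y))
    (t₀ : ℝ) :
    (t₀ ∈ Ioc a b → IsFocal g R P S a b t₀ →
      (∀ x ∈ solSpace g R P S a b t₀,
        (∀ y ∈ solSpace g R P S a b t₀, g x y = 0) → x = 0) →
      ∃ δ > 0, ∀ t ∈ Ioc a b, t ≠ t₀ → |t - t₀| < δ → ¬ IsFocal g R P S a b t) ∧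
    (∃ ε > 0, ∀ t ∈ Ioc a b, t ≤ a + ε → ¬ IsFocal g R P S a b t) := by
  refine ⟨fun ht₀ _ hnd => ?_, ?_⟩
  · obtain ⟨δ, hδ, hδ'⟩ := exists_pos_forall_not_isFocal hab hRcont (Ioc_subset_Icc_self ht₀)
      fun L hL hL₀ hmem => hnd _ hmem fun _ ⟨K, hK, hKt₀⟩ => by
        rw [← hKt₀, hL.wronskian_eq_zero hab hgsymm hRsymm hSsymm hK (Ioc_subset_Icc_self ht₀),
          hL₀, map_zero, LinearMap.zero_apply]
    exact ⟨δ, hδ, fun t ht => hδ' t (Ioc_subset_Icc_self ht)⟩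
  · obtain ⟨δ, hδ, hδ'⟩ := exists_pos_forall_not_isFocal hab hRcont (left_mem_Icc.2 hab.le)
      fun L hL hL₀ hmem => by
        obtain ⟨K, hK, hKa⟩ := hmem
        exact hPnd _ (hKa ▸ hK.2.2.1) fun y hy => by simpa [hL₀] using hL.2.2.2 y hy
    refine ⟨δ / 2, half_pos hδ, fun t ht hta => hδ' t (Ioc_subset_Icc_self ht) ht.1.ne' ?_⟩
    rw [abs_of_pos (sub_pos.2 ht.1)]
    linarith

/-- (i) If `t₀ ∈ (a,b]` is a `(P,S)`-focal instant and `g` is nondegenerate on `𝕁[t₀]`,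
then no nearby instant (other than `t₀`) in `(a,b]` is `(P,S)`-focal.
(ii) There are no `(P,S)`-focal instants near the initial instant `a`. -/
theorem focal_instants_isolated {n : ℕ}
    (g : (Fin n → ℝ) →ₗ[ℝ] (Fin n → ℝ) →ₗ[ℝ] ℝ)
    (R : ℝ → (Fin n → ℝ) →L[ℝ] (Fin n → ℝ))
    (P : Submodule ℝ (Fin n → ℝ)) (S : (Fin n → ℝ) →ₗ[ℝ] (Fin n → ℝ))
    (a b : ℝ) (hab : a < b)
    (hgsymm : ∀ x y, g x y = g y x)
    (hgnd : ∀ x, (∀ y, g x y = 0) → x = 0)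
    (hRcont : ContinuousOn R (Icc a b))
    (hRsymm : ∀ t ∈ Icc a b, ∀ x y, g (R t x) y = g x (R t y))
    (hPnd : ∀ x ∈ P, (∀ y ∈ P, g x y = 0) → x = 0)
    (hSP : ∀ x ∈ P, S x ∈ P)
    (hSsymm : ∀ x ∈ P, ∀ y ∈ P, g (S x) y = g x (S y))
    (t₀ : ℝ) :
    (t₀ ∈ Ioc a b → IsFocal g R P S a b t₀ →
      (∀ x ∈ solSpace g R P S a b t₀,
        (∀ y ∈ solSpace g R P S a b t₀, g x y = 0) → x = 0) →
      ∃ δ > 0, ∀ t ∈ Ioc a b, t ≠ t₀ → |t - t₀| < δ → ¬ IsFocal g R P S a b t) ∧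
    (∃ ε > 0, ∀ t ∈ Ioc a b, t ≤ a + ε → ¬ IsFocal g R P S a b t) :=
  focal_instants_isolated_general g R P S a b hab hgsymm hRcont hRsymm hPnd hSsymm t₀
end

section
/- Let (V,ω) be a real symplectic space of dimension 2n, let L₀ be a Lagrangian subspace of V, and let k ∈ {0,…,n}. If L and L' are Lagrangian subspaces of V with dim(L ∩ L₀) = dim(L' ∩ L₀) = k, then there exists a linear automorphism ψ of V such that ω(ψx, ψy) = ω(x,y) for all x, y ∈ V, ψ(L₀) = L₀, the restriction of ψ to L₀ has positive determinant, and ψ(L) = L'. -/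
set_option linter.unusedSectionVars false
set_option maxHeartbeats 1000000
open Module Submodule Set LinearMap

section prelim
variable {V : Type*} [AddCommGroup V] [Module ℝ V] [FiniteDimensional ℝ V] {ι' : Type*}


variable {V : Type*} [AddCommGroup V] [Module ℝ V] [FiniteDimensional ℝ V]

lemma omega_skew (ω : V →ₗ[ℝ] V →ₗ[ℝ] ℝ) (halt : ∀ x, ω x x = 0) (x y : V) :
    ω x y = - ω y x := by
  have h := halt (x + y)
  simp only [map_add, LinearMap.add_apply, halt] at h
  linarith

lemma pair_surj {n : ℕ} (hV : Module.finrank ℝ V = 2 * n) (ω : V →ₗ[ℝ] Module.Dual ℝ V)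
    (hinj : Function.Injective ω) (P : Submodule ℝ V) :
    Function.Surjective (P.dualRestrict ∘ₗ ω) := by
  have hsurj : Function.Surjective ω := by
    rw [← LinearMap.injective_iff_surjective_of_finrank_eq_finrank
      (Subspace.dual_finrank_eq).symm]
    exact hinj
  exact (Subspace.dualRestrict_surjective).comp hsurj

lemma mem_ker_pair (ω : V →ₗ[ℝ] Module.Dual ℝ V) (P : Submodule ℝ V) (x : V) :
    x ∈ LinearMap.ker (P.dualRestrict ∘ₗ ω) ↔ ∀ y ∈ P, ω x y = 0 := by
  constructor
  · intro h y hy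
    have := LinearMap.congr_fun (LinearMap.mem_ker.mp h) ⟨y, hy⟩
    simpa using this
  · intro h
    rw [LinearMap.mem_ker]
    ext y
    simpa using h y y.2

lemma finrank_ker_pair {n : ℕ} (hV : Module.finrank ℝ V = 2 * n)
    (ω : V →ₗ[ℝ] Module.Dual ℝ V) (hinj : Function.Injective ω) (P : Submodule ℝ V) :
    Module.finrank ℝ ↥(LinearMap.ker (P.dualRestrict ∘ₗ ω)) = 2 * n - Module.finrank ℝ ↥P := by
  have h1 := LinearMap.finrank_range_add_finrank_ker (P.dualRestrict ∘ₗ ω)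
  rw [LinearMap.range_eq_top.mpr (pair_surj hV ω hinj P), hV] at h1
  rw [finrank_top, Subspace.dual_finrank_eq] at h1
  omega

lemma lagrangian_ker {n : ℕ} (hV : Module.finrank ℝ V = 2 * n)
    (ω : V →ₗ[ℝ] Module.Dual ℝ V) (hinj : Function.Injective ω) (P : Submodule ℝ V)
    (hPdim : Module.finrank ℝ ↥P = n) (hP : ∀ x ∈ P, ∀ y ∈ P, ω x y = 0) :
    LinearMap.ker (P.dualRestrict ∘ₗ ω) = P := by
  have hle : P ≤ LinearMap.ker (P.dualRestrict ∘ₗ ω) := by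
    intro x hx
    exact (mem_ker_pair ω P x).mpr (fun y hy => hP x hx y hy)
  refine (Submodule.eq_of_le_of_finrank_le hle ?_).symm
  rw [finrank_ker_pair hV ω hinj P, hPdim]
  omega

lemma indep_sympl {ι : Type*} [Fintype ι] [DecidableEq ι]
    (ω : V →ₗ[ℝ] V →ₗ[ℝ] ℝ)
    (e f : ι → V)
    (hee : ∀ i j, ω (e i) (e j) = 0)
    (hff : ∀ i j, ω (f i) (f j) = 0)
    (hef : ∀ i j, ω (e i) (f j) = if i = j then 1 else 0)
    (hskew : ∀ x y, ω x y = - ω y x) :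
    LinearIndependent ℝ (Sum.elim e f) := by
  rw [Fintype.linearIndependent_iff]
  intro g hg
  have key : ∀ z : V, ∑ m : ι ⊕ ι, g m * ω (Sum.elim e f m) z = 0 := by
    intro z
    have := congrArg (fun w => ω w z) hg
    simpa [map_sum, Finset.sum_apply] using this
  have hel : ∀ j, g (Sum.inl j) = 0 := by
    intro j
    have h := key (f j)
    rw [Fintype.sum_sum_type] at h
    simp only [Sum.elim_inl, Sum.elim_inr, hef, hff, mul_zero, mul_ite, mul_one,
      Finset.sum_add_distrib, Finset.sum_const_zero, add_zero, Finset.sum_ite_eq',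
      Finset.mem_univ, if_true] at h
    exact h
  have her : ∀ j, g (Sum.inr j) = 0 := by
    intro j
    have h := key (e j)
    rw [Fintype.sum_sum_type] at h
    have hfe : ∀ i, ω (f i) (e j) = if j = i then (-1 : ℝ) else 0 := by
      intro i
      rw [hskew (f i) (e j), hef]
      split <;> simp
    simp only [Sum.elim_inl, Sum.elim_inr, hee, hfe, mul_zero, mul_ite, mul_one,
      Finset.sum_const_zero, zero_add, mul_neg] at h
    rw [Finset.sum_ite_eq (Finset.univ) j (fun i => -(g (Sum.inr i)))] at h
    simpa using h
  intro m
  cases m with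
  | inl j => exact hel j
  | inr j => exact her j

/-- Adapted symplectic basis for a pair of Lagrangians. -/
lemma adapted_basis {n k : ℕ} (hV : Module.finrank ℝ V = 2 * n)
    (ω : V →ₗ[ℝ] V →ₗ[ℝ] ℝ)
    (halt : ∀ x, ω x x = 0)
    (hnd : ∀ x, (∀ y, ω x y = 0) → x = 0)
    (L₀ : Submodule ℝ V)
    (hL₀dim : Module.finrank ℝ ↥L₀ = n)
    (hL₀ : ∀ x ∈ L₀, ∀ y ∈ L₀, ω x y = 0)
    (hk : k ≤ n)
    (L : Submodule ℝ V)
    (hLdim : Module.finrank ℝ ↥L = n)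
    (hL : ∀ x ∈ L, ∀ y ∈ L, ω x y = 0)
    (hLk : Module.finrank ℝ ↥(L ⊓ L₀) = k) :
    ∃ e f : Fin k ⊕ Fin (n - k) → V,
      (∀ i, e i ∈ L₀) ∧
      (∀ i j, ω (f i) (f j) = 0) ∧
      (∀ i j, ω (e i) (f j) = if i = j then 1 else 0) ∧
      Submodule.span ℝ (Set.range e) = L₀ ∧
      Submodule.span ℝ (Set.range (Sum.elim (e ∘ Sum.inl) (f ∘ Sum.inr))) = L := by
  classical
  have hskew := omega_skew ω halt
  have hflipinj : Function.Injective (ω.flip : V →ₗ[ℝ] Module.Dual ℝ V) := by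
    rw [← LinearMap.ker_eq_bot, Submodule.eq_bot_iff]
    intro x hx
    refine hnd x (fun y => ?_)
    have := LinearMap.congr_fun (LinearMap.mem_ker.mp hx) y
    rw [hskew]
    simpa using this
  -- the basis E of L₀ adapted to W = L ⊓ L₀
  set W' : Submodule ℝ ↥L₀ := (L ⊓ L₀).comap L₀.subtype with hW'def
  have hW'rank : Module.finrank ℝ ↥W' = k := by
    rw [(Submodule.comapSubtypeEquivOfLe (inf_le_right : L ⊓ L₀ ≤ L₀)).finrank_eq, hLk]
  obtain ⟨C', hC'⟩ := Submodule.exists_isCompl W'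
  have hC'rank : Module.finrank ℝ ↥C' = n - k := by
    have := Submodule.finrank_add_eq_of_isCompl hC'
    rw [hW'rank, hL₀dim] at this
    omega
  set bW' : Basis (Fin k) ℝ ↥W' := Module.finBasisOfFinrankEq ℝ ↥W' hW'rank with hbW'
  set bC' : Basis (Fin (n - k)) ℝ ↥C' := Module.finBasisOfFinrankEq ℝ ↥C' hC'rank with hbC'
  set E : Basis (Fin k ⊕ Fin (n - k)) ℝ ↥L₀ :=
    (bW'.prod bC').map (Submodule.prodEquivOfIsCompl W' C' hC') with hEdef
  have hEinl : ∀ i, E (Sum.inl i) = ↑(bW' i) := by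
    intro i; simp [hEdef, Basis.prod_apply, Submodule.coe_prodEquivOfIsCompl]
  have hEinr : ∀ j, E (Sum.inr j) = ↑(bC' j) := by
    intro j; simp [hEdef, Basis.prod_apply, Submodule.coe_prodEquivOfIsCompl]
  set e : Fin k ⊕ Fin (n - k) → V := fun i => ↑(E i) with hedef
  have heL₀ : ∀ i, e i ∈ L₀ := fun i => (E i).2
  have heinlL : ∀ i, e (Sum.inl i) ∈ L := by
    intro i
    have : E (Sum.inl i) ∈ W' := by rw [hEinl i]; exact (bW' i).2
    exact (Submodule.mem_comap.mp this).1
  have hee : ∀ i j, ω (e i) (e j) = 0 := fun i j => hL₀ _ (heL₀ i) _ (heL₀ j)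
  -- the pairing T x = ω · x restricted to L₀
  set T : V →ₗ[ℝ] Module.Dual ℝ ↥L₀ := L₀.dualRestrict ∘ₗ ω.flip with hTdef
  have hTapp : ∀ (x : V) (y : ↥L₀), T x y = ω (↑y) x := fun x y => rfl
  have hTsurj : Function.Surjective T := pair_surj hV ω.flip hflipinj L₀
  have hkerT : LinearMap.ker T = L₀ := by
    refine lagrangian_ker hV ω.flip hflipinj L₀ hL₀dim ?_
    intro x hx y hy
    exact hL₀ y hy x hx
  -- the complement U of W in L
  set W'' : Submodule ℝ ↥L := (L ⊓ L₀).comap L.subtype with hW''def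
  obtain ⟨U', hU'⟩ := Submodule.exists_isCompl W''
  have hW''rank : Module.finrank ℝ ↥W'' = k := by
    rw [(Submodule.comapSubtypeEquivOfLe (inf_le_left : L ⊓ L₀ ≤ L)).finrank_eq, hLk]
  have hU'rank : Module.finrank ℝ ↥U' = n - k := by
    have := Submodule.finrank_add_eq_of_isCompl hU'
    rw [hW''rank, hLdim] at this
    omega
  set U : Submodule ℝ V := U'.map L.subtype with hUdef
  have hUL : U ≤ L := Submodule.map_subtype_le L U'
  have hUrank : Module.finrank ℝ ↥U = n - k := by
    rw [← hU'rank]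
    exact (Submodule.equivMapOfInjective L.subtype (Submodule.injective_subtype L) U').finrank_eq.symm
  -- the pairing ρ : U → Dual C'
  set ρ : ↥U →ₗ[ℝ] Module.Dual ℝ ↥C' := C'.dualRestrict ∘ₗ T ∘ₗ U.subtype with hρdef
  have hρapp : ∀ (u : ↥U) (c : ↥C'), ρ u c = ω (↑(↑c : ↥L₀)) ↑u := fun u c => rfl
  have hρinj : Function.Injective ρ := by
    rw [← LinearMap.ker_eq_bot, Submodule.eq_bot_iff]
    intro u hu
    have hu' : ρ u = 0 := LinearMap.mem_ker.mp hu
    have hT0 : T ↑u = 0 := by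
      refine Module.Basis.ext E (fun m => ?_)
      rw [LinearMap.zero_apply]
      cases m with
      | inl i =>
        rw [hTapp]
        exact hL _ (heinlL i) _ (hUL u.2)
      | inr j =>
        have := LinearMap.congr_fun hu' (bC' j)
        rw [hρapp] at this
        rw [hTapp, hEinr j]
        simpa using this
    have huL₀ : (↑u : V) ∈ L₀ := by rw [← hkerT]; exact LinearMap.mem_ker.mpr hT0
    obtain ⟨u', hu'U, huv⟩ := u.2
    have hu'W : u' ∈ W'' := by
      refine Submodule.mem_comap.mpr ?_
      refine Submodule.mem_inf.mpr ⟨u'.2, ?_⟩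
      rw [show (L.subtype u' : V) = ↑u from huv]
      exact huL₀
    have : u' = 0 := by
      have := hU'.disjoint.le_bot (Submodule.mem_inf.mpr ⟨hu'W, hu'U⟩)
      simpa using this
    apply Subtype.ext
    rw [← huv, this]
    simp
  have hρsurj : Function.Surjective ρ := by
    rw [← LinearMap.injective_iff_surjective_of_finrank_eq_finrank
      (by rw [hUrank, Subspace.dual_finrank_eq, hC'rank])]
    exact hρinj
  choose uu huu using fun j => hρsurj (bC'.coord j)
  choose xx hxx using fun (m : Fin k ⊕ Fin (n - k)) => hTsurj (E.coord m)
  set f' : Fin k ⊕ Fin (n - k) → V :=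
    Sum.elim (fun j => xx (Sum.inl j)) (fun j => ↑(uu j)) with hf'def
  have hf'L : ∀ j, f' (Sum.inr j) ∈ L := fun j => hUL (uu j).2
  have hef' : ∀ m j, ω (e m) (f' j) = if m = j then 1 else 0 := by
    intro m j
    cases j with
    | inl j =>
      have : T (xx (Sum.inl j)) (E m) = E.coord (Sum.inl j) (E m) := by
        rw [hxx (Sum.inl j)]
      rw [hTapp] at this
      rw [show f' (Sum.inl j) = xx (Sum.inl j) from rfl, show e m = ↑(E m) from rfl, this]
      simp [Basis.coord_apply, Basis.repr_self, Finsupp.single_apply]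
    | inr j =>
      cases m with
      | inl i =>
        rw [show f' (Sum.inr j) = ↑(uu j) from rfl]
        rw [hL _ (heinlL i) _ (hUL (uu j).2)]
        simp
      | inr i =>
        have h1 : ρ (uu j) (bC' i) = bC'.coord j (bC' i) := by rw [huu j]
        rw [hρapp] at h1
        have h2 : e (Sum.inr i) = ↑(↑(bC' i) : ↥L₀) := by
          show ((E (Sum.inr i) : ↥L₀) : V) = ↑(↑(bC' i) : ↥L₀)
          exact congrArg _ (hEinr i)
        rw [show f' (Sum.inr j) = ↑(uu j) from rfl, h2, h1]
        simp [Basis.coord_apply, Basis.repr_self, Finsupp.single_apply]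
  -- correction coefficients
  set cc : (Fin k ⊕ Fin (n - k)) → (Fin k ⊕ Fin (n - k)) → ℝ := fun i j =>
    match i, j with
    | Sum.inl i, Sum.inl j => - ω (f' (Sum.inl i)) (f' (Sum.inl j)) / 2
    | Sum.inr i, Sum.inl j => - ω (f' (Sum.inr i)) (f' (Sum.inl j))
    | _, Sum.inr _ => 0
    with hccdef
  have hff'U : ∀ i j, ω (f' (Sum.inr i)) (f' (Sum.inr j)) = 0 := fun i j =>
    hL _ (hf'L i) _ (hf'L j)
  have hcc : ∀ i j, cc i j - cc j i = - ω (f' i) (f' j) := by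
    intro i j
    cases i with
    | inl i =>
      cases j with
      | inl j =>
        show - ω (f' (Sum.inl i)) (f' (Sum.inl j)) / 2 -
          (- ω (f' (Sum.inl j)) (f' (Sum.inl i)) / 2) = _
        rw [hskew (f' (Sum.inl j)) (f' (Sum.inl i))]
        ring
      | inr j =>
        show (0 : ℝ) - (- ω (f' (Sum.inr j)) (f' (Sum.inl i))) = _
        rw [hskew (f' (Sum.inr j)) (f' (Sum.inl i))]
        ring
    | inr i =>
      cases j with
      | inl j => show - ω (f' (Sum.inr i)) (f' (Sum.inl j)) - 0 = _; ring
      | inr j => show (0:ℝ) - 0 = _; rw [hff'U i j]; ring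
  set f : Fin k ⊕ Fin (n - k) → V := fun i => f' i + ∑ j, cc i j • e j with hfdef
  have hef : ∀ m i, ω (e m) (f i) = if m = i then 1 else 0 := by
    intro m i
    rw [hfdef]
    simp only [map_add, map_sum, map_smul, smul_eq_mul, hee, mul_zero,
      Finset.sum_const_zero, add_zero]
    exact hef' m i
  have hfe : ∀ m i, ω (f i) (e m) = if m = i then (-1:ℝ) else 0 := by
    intro m i
    rw [hskew, hef]
    split <;> simp
  have hff : ∀ i j, ω (f i) (f j) = 0 := by
    intro i j
    have expand : ω (f i) (f j)
        = ω (f' i) (f' j) + (∑ m, cc j m * ω (f' i) (e m))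
          + (∑ l, cc i l * ω (e l) (f' j))
          + (∑ l, cc i l * ∑ m, cc j m * ω (e l) (e m)) := by
      rw [hfdef]
      simp only [map_add, map_sum, map_smul, LinearMap.add_apply, LinearMap.sum_apply,
        LinearMap.smul_apply, smul_eq_mul, mul_add, Finset.mul_sum, Finset.sum_add_distrib]
      rw [Finset.sum_comm (f := fun x x1 => cc j x * (cc i x1 * ω (e x1) (e x)))]
      rw [show (∑ x1 : Fin k ⊕ Fin (n-k), ∑ x : Fin k ⊕ Fin (n-k),
          cc j x * (cc i x1 * ω (e x1) (e x)))
          = ∑ x1 : Fin k ⊕ Fin (n-k), ∑ x : Fin k ⊕ Fin (n-k),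
          cc i x1 * (cc j x * ω (e x1) (e x)) from
        Finset.sum_congr rfl fun l _ => Finset.sum_congr rfl fun m _ => by ring]
      ring
    rw [expand]
    have h1 : ∀ m, ω (f' i) (e m) = if m = i then (-1:ℝ) else 0 := by
      intro m; rw [hskew, hef']; split <;> simp
    have h2 : (∑ m, cc j m * ω (f' i) (e m)) = - cc j i := by
      simp only [h1, mul_ite, mul_neg, mul_one, mul_zero]
      rw [Finset.sum_ite_eq' Finset.univ i (fun m => -(cc j m))]
      simp
    have h3 : (∑ l, cc i l * ω (e l) (f' j)) = cc i j := by
      simp only [hef', mul_ite, mul_one, mul_zero]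
      rw [Finset.sum_ite_eq' Finset.univ j (fun l : Fin k ⊕ Fin (n-k) => cc i l)]
      simp
    have h4 : (∑ l, cc i l * ∑ m, cc j m * ω (e l) (e m)) = 0 := by
      simp [hee]
    rw [h2, h3, h4]
    have := hcc i j
    linarith
  have hfL : ∀ j, f (Sum.inr j) ∈ L := by
    intro j
    rw [hfdef]
    refine Submodule.add_mem L (hf'L j) (Submodule.sum_mem L ?_)
    intro m _
    cases m with
    | inl i => exact Submodule.smul_mem L _ (heinlL i)
    | inr i =>
      rw [show cc (Sum.inr j) (Sum.inr i) = 0 from rfl, zero_smul]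
      exact Submodule.zero_mem L
  -- independence and spans
  have hindep : LinearIndependent ℝ (Sum.elim e f) := indep_sympl ω e f hee hff hef hskew
  have hcard : Fintype.card (Fin k ⊕ Fin (n - k)) = n := by
    simp [Fintype.card_sum]; omega
  have heindep : LinearIndependent ℝ e := by
    have := hindep.comp Sum.inl Sum.inl_injective
    rwa [Sum.elim_comp_inl] at this
  have hspanE : Submodule.span ℝ (Set.range e) = L₀ := by
    refine Submodule.eq_of_le_of_finrank_le (Submodule.span_le.mpr ?_) ?_
    · rintro x ⟨i, rfl⟩; exact heL₀ i
    · rw [hL₀dim, finrank_span_eq_card heindep, hcard]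
  set g : Fin k ⊕ Fin (n - k) → V := Sum.elim (e ∘ Sum.inl) (f ∘ Sum.inr) with hgdef
  have hgindep : LinearIndependent ℝ g := by
    have hgeq : g = (Sum.elim e f) ∘ (Sum.elim (Sum.inl ∘ Sum.inl) (Sum.inr ∘ Sum.inr)) := by
      funext m; cases m <;> rfl
    rw [hgeq]
    refine hindep.comp _ ?_
    intro a b hab
    cases a <;> cases b <;> simpa using hab
  have hspanL : Submodule.span ℝ (Set.range g) = L := by
    refine Submodule.eq_of_le_of_finrank_le (Submodule.span_le.mpr ?_) ?_
    · rintro x ⟨i, rfl⟩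
      cases i with
      | inl i => exact heinlL i
      | inr i => exact hfL i
    · rw [hLdim, finrank_span_eq_card hgindep, hcard]
  exact ⟨e, f, heL₀, hff, hef, hspanE, hspanL⟩


lemma span_smul_family {s : ι' → ℝ} (hs : ∀ i, s i ≠ 0) (v : ι' → V) :
    Submodule.span ℝ (Set.range (fun i => s i • v i)) = Submodule.span ℝ (Set.range v) := by
  apply le_antisymm <;> rw [Submodule.span_le] <;> rintro x ⟨i, rfl⟩
  · exact Submodule.smul_mem _ _ (Submodule.subset_span ⟨i, rfl⟩)
  · have : v i = (s i)⁻¹ • (s i • v i) := by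
      rw [smul_smul, inv_mul_cancel₀ (hs i), one_smul]
    rw [this]
    exact Submodule.smul_mem _ _ (Submodule.subset_span ⟨i, rfl⟩)

lemma build_psi {n : ℕ} (hV : Module.finrank ℝ V = 2 * n)
    (ω : V →ₗ[ℝ] V →ₗ[ℝ] ℝ) (hskew : ∀ x y, ω x y = - ω y x)
    {ι : Type*} [Fintype ι] [DecidableEq ι] [Nonempty ι] (hcard : Fintype.card ι = n)
    (e f e1 f1 : ι → V)
    (hee : ∀ i j, ω (e i) (e j) = 0) (hff : ∀ i j, ω (f i) (f j) = 0)
    (hef : ∀ i j, ω (e i) (f j) = if i = j then 1 else 0)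
    (hee1 : ∀ i j, ω (e1 i) (e1 j) = 0) (hff1 : ∀ i j, ω (f1 i) (f1 j) = 0)
    (hef1 : ∀ i j, ω (e1 i) (f1 j) = if i = j then 1 else 0) :
    ∃ ψ : V ≃ₗ[ℝ] V, (∀ x y, ω (ψ x) (ψ y) = ω x y) ∧
      (∀ i, ψ (e i) = e1 i) ∧ (∀ i, ψ (f i) = f1 i) := by
  classical
  have hindep := indep_sympl ω e f hee hff hef hskew
  have hindep1 := indep_sympl ω e1 f1 hee1 hff1 hef1 hskew
  have hcard2 : Fintype.card (ι ⊕ ι) = Module.finrank ℝ V := by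
    simp [Fintype.card_sum, hcard, hV]; ring
  set B := basisOfLinearIndependentOfCardEqFinrank hindep hcard2 with hB
  set B1 := basisOfLinearIndependentOfCardEqFinrank hindep1 hcard2 with hB1
  have hBapp : ∀ m, B m = Sum.elim e f m := fun m => by
    rw [hB, coe_basisOfLinearIndependentOfCardEqFinrank]
  have hB1app : ∀ m, B1 m = Sum.elim e1 f1 m := fun m => by
    rw [hB1, coe_basisOfLinearIndependentOfCardEqFinrank]
  set ψ : V ≃ₗ[ℝ] V := B.equiv B1 (Equiv.refl _) with hψ
  have hψv : ∀ m, ψ (Sum.elim e f m) = Sum.elim e1 f1 m := by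
    intro m
    rw [← hBapp m, hψ, Basis.equiv_apply, Equiv.refl_apply, hB1app m]
  have hω : ∀ x y, ω (ψ x) (ψ y) = ω x y := by
    have hsuff : (ω.compl₁₂ (ψ : V →ₗ[ℝ] V) (ψ : V →ₗ[ℝ] V)) = ω := by
      refine LinearMap.ext_basis B B ?_
      intro m m'
      rw [LinearMap.compl₁₂_apply]
      simp only [LinearEquiv.coe_coe]
      rw [hBapp m, hBapp m', hψv m, hψv m']
      cases m with
      | inl i =>
        cases m' with
        | inl j => simp only [Sum.elim_inl]; rw [hee1, hee]
        | inr j => simp only [Sum.elim_inl, Sum.elim_inr]; rw [hef1, hef]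
      | inr i =>
        cases m' with
        | inl j =>
          simp only [Sum.elim_inl, Sum.elim_inr]
          rw [hskew (f1 i) (e1 j), hskew (f i) (e j), hef1, hef]
        | inr j => simp only [Sum.elim_inr]; rw [hff1, hff]
    intro x y
    exact LinearMap.congr_fun₂ hsuff x y
  exact ⟨ψ, hω, fun i => hψv (Sum.inl i), fun i => hψv (Sum.inr i)⟩

end prelim

/-- The group `Sp₊(V,ω,L₀)` of symplectomorphisms of `(V,ω)` preserving `L₀` whose restriction
to `L₀` is orientation preserving acts transitively on the set of Lagrangians `L` with
`dim(L ∩ L₀) = k`. -/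
theorem symplectomorphism_transitive_on_lagrangians_with_fixed_intersection
    {V : Type*} [AddCommGroup V] [Module ℝ V] [FiniteDimensional ℝ V]
    {n : ℕ} (hV : Module.finrank ℝ V = 2 * n)
    (ω : V →ₗ[ℝ] V →ₗ[ℝ] ℝ)
    (halt : ∀ x, ω x x = 0)
    (hnd : ∀ x, (∀ y, ω x y = 0) → x = 0)
    (L₀ : Submodule ℝ V)
    (hL₀dim : Module.finrank ℝ ↥L₀ = n)
    (hL₀ : ∀ x ∈ L₀, ∀ y ∈ L₀, ω x y = 0)
    (k : ℕ) (hk : k ≤ n)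
    (L L' : Submodule ℝ V)
    (hLdim : Module.finrank ℝ ↥L = n)
    (hL : ∀ x ∈ L, ∀ y ∈ L, ω x y = 0)
    (hL'dim : Module.finrank ℝ ↥L' = n)
    (hL' : ∀ x ∈ L', ∀ y ∈ L', ω x y = 0)
    (hLk : Module.finrank ℝ ↥(L ⊓ L₀) = k)
    (hL'k : Module.finrank ℝ ↥(L' ⊓ L₀) = k) :
    ∃ ψ : V ≃ₗ[ℝ] V,
      (∀ x y : V, ω (ψ x) (ψ y) = ω x y) ∧
      Submodule.map (ψ : V →ₗ[ℝ] V) L₀ = L₀ ∧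
      (∃ h : ∀ x ∈ L₀, ψ.toLinearMap x ∈ L₀, 0 < LinearMap.det (ψ.toLinearMap.restrict h)) ∧
      Submodule.map (ψ : V →ₗ[ℝ] V) L = L' := by
  classical
  have hskew := omega_skew ω halt
  by_cases hn : n = 0
  · subst hn
    have hsub : Subsingleton V := Module.finrank_zero_iff.mp (by simpa using hV)
    refine ⟨LinearEquiv.refl ℝ V, fun x y => rfl, ?_, ⟨fun x hx => hx, ?_⟩, ?_⟩
    · rw [show ((LinearEquiv.refl ℝ V : V ≃ₗ[ℝ] V) : V →ₗ[ℝ] V) = LinearMap.id from rfl,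
        Submodule.map_id]
    · have hsubL₀ : Subsingleton ↥L₀ := by infer_instance
      rw [show ((LinearEquiv.refl ℝ V).toLinearMap.restrict (fun x hx => hx)) = LinearMap.id
        from Subsingleton.elim _ _]
      rw [LinearMap.det_id]
      norm_num
    · rw [show ((LinearEquiv.refl ℝ V : V ≃ₗ[ℝ] V) : V →ₗ[ℝ] V) = LinearMap.id from rfl,
        Submodule.map_id, Subsingleton.elim L L']
  obtain ⟨e, f, heL₀, hff, hef, hspanE, hspanL⟩ :=
    adapted_basis hV ω halt hnd L₀ hL₀dim hL₀ hk L hLdim hL hLk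
  obtain ⟨ea, fa, heaL₀, hffa, hefa, hspanEa, hspanLa⟩ :=
    adapted_basis hV ω halt hnd L₀ hL₀dim hL₀ hk L' hL'dim hL' hL'k
  haveI hNE : Nonempty (Fin k ⊕ Fin (n - k)) := by
    rcases Nat.eq_zero_or_pos k with h0 | hpos
    · exact ⟨Sum.inr ⟨0, by omega⟩⟩
    · exact ⟨Sum.inl ⟨0, by omega⟩⟩
  have hcard : Fintype.card (Fin k ⊕ Fin (n - k)) = n := by
    simp [Fintype.card_sum]; omega
  have hee : ∀ i j, ω (e i) (e j) = 0 := fun i j => hL₀ _ (heL₀ i) _ (heL₀ j)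
  set eHat : Fin k ⊕ Fin (n - k) → ↥L₀ := fun i => ⟨e i, heL₀ i⟩ with heHatdef
  have hindep : LinearIndependent ℝ (Sum.elim e f) := indep_sympl ω e f hee hff hef hskew
  have heindep : LinearIndependent ℝ e := by
    have := hindep.comp Sum.inl Sum.inl_injective
    rwa [Sum.elim_comp_inl] at this
  have heHatindep : LinearIndependent ℝ eHat :=
    LinearIndependent.of_comp L₀.subtype (by exact heindep)
  have heHatspan : ⊤ ≤ Submodule.span ℝ (Set.range eHat) := by
    have hmap : Submodule.map L₀.subtype (Submodule.span ℝ (Set.range eHat))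
        = Submodule.map L₀.subtype ⊤ := by
      rw [Submodule.map_span, ← Set.range_comp, show (⇑L₀.subtype ∘ eHat) = e from rfl,
        hspanE, Submodule.map_subtype_top]
    exact ge_of_eq (Submodule.map_injective_of_injective L₀.injective_subtype hmap)
  set EL : Basis (Fin k ⊕ Fin (n - k)) ℝ ↥L₀ := Basis.mk heHatindep heHatspan with hELdef
  have hELapp : ∀ i, EL i = eHat i := fun i => by rw [hELdef, Basis.mk_apply]
  obtain ⟨e1, f1, he1, hff1, hef1, hspanE1, hspanL1, hdpos⟩ :
      ∃ (e1 f1 : Fin k ⊕ Fin (n - k) → V) (he1 : ∀ i, e1 i ∈ L₀),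
        (∀ i j, ω (f1 i) (f1 j) = 0) ∧
        (∀ i j, ω (e1 i) (f1 j) = if i = j then 1 else 0) ∧
        Submodule.span ℝ (Set.range e1) = L₀ ∧
        Submodule.span ℝ (Set.range (Sum.elim (e1 ∘ Sum.inl) (f1 ∘ Sum.inr))) = L' ∧
        0 < EL.det (fun i => ⟨e1 i, he1 i⟩) := by
    have heea : ∀ i j, ω (ea i) (ea j) = 0 := fun i j => hL₀ _ (heaL₀ i) _ (heaL₀ j)
    have hindepa : LinearIndependent ℝ (Sum.elim ea fa) :=
      indep_sympl ω ea fa heea hffa hefa hskew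
    have heaindep : LinearIndependent ℝ ea := by
      have := hindepa.comp Sum.inl Sum.inl_injective
      rwa [Sum.elim_comp_inl] at this
    set eHata : Fin k ⊕ Fin (n - k) → ↥L₀ := fun i => ⟨ea i, heaL₀ i⟩ with heHatadef
    have heHataindep : LinearIndependent ℝ eHata :=
      LinearIndependent.of_comp L₀.subtype (by exact heaindep)
    have heHataspan : ⊤ ≤ Submodule.span ℝ (Set.range eHata) := by
      have hmap : Submodule.map L₀.subtype (Submodule.span ℝ (Set.range eHata))
          = Submodule.map L₀.subtype ⊤ := by
        rw [Submodule.map_span, ← Set.range_comp, show (⇑L₀.subtype ∘ eHata) = ea from rfl,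
          hspanEa, Submodule.map_subtype_top]
      exact ge_of_eq (Submodule.map_injective_of_injective L₀.injective_subtype hmap)
    have hd : EL.det eHata ≠ 0 := by
      have h1 := EL.isUnit_det (Basis.mk heHataindep heHataspan)
      rw [Basis.coe_mk] at h1
      exact h1.ne_zero
    rcases hd.lt_or_gt with hneg | hpos
    · set i₀ : Fin k ⊕ Fin (n - k) := hNE.some with hi₀
      set s : Fin k ⊕ Fin (n - k) → ℝ := fun i => if i = i₀ then -1 else 1 with hsdef
      have hsne : ∀ i, s i ≠ 0 := by
        intro i; rw [hsdef]; dsimp only; split <;> norm_num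
      have hs1 : ∀ i, s i * s i = 1 := by
        intro i; rw [hsdef]; dsimp only; split <;> norm_num
      refine ⟨fun i => s i • ea i, fun i => s i • fa i,
        fun i => Submodule.smul_mem _ _ (heaL₀ i), ?_, ?_, ?_, ?_, ?_⟩
      · intro i j
        simp only [map_smul, LinearMap.smul_apply, smul_eq_mul, hffa, mul_zero]
      · intro i j
        simp only [map_smul, LinearMap.smul_apply, smul_eq_mul, hefa]
        split_ifs with h
        · rw [mul_one, h, hs1]
        · rw [mul_zero, mul_zero]
      · exact (span_smul_family hsne ea).trans hspanEa
      · have hfun : Sum.elim ((fun i => s i • ea i) ∘ Sum.inl) ((fun i => s i • fa i) ∘ Sum.inr)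
            = fun m => s m • (Sum.elim (ea ∘ Sum.inl) (fa ∘ Sum.inr)) m := by
          funext m; cases m <;> rfl
        rw [hfun]
        exact (span_smul_family hsne _).trans hspanLa
      · rw [show (fun i => (⟨s i • ea i, Submodule.smul_mem _ _ (heaL₀ i)⟩ : ↥L₀))
            = fun i => s i • eHata i from funext fun i => Subtype.ext rfl]
        rw [show EL.det (fun i => s i • eHata i) = (∏ i, s i) • EL.det eHata from
          EL.det.toMultilinearMap.map_smul_univ s eHata]
        rw [show (∏ i, s i) = (-1 : ℝ) from by
          rw [hsdef, Finset.prod_ite_eq' Finset.univ i₀ (fun _ => (-1 : ℝ))]; simp]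
        simp only [neg_smul, one_smul, smul_eq_mul, neg_mul, one_mul]
        linarith
    · exact ⟨ea, fa, heaL₀, hffa, hefa, hspanEa, hspanLa, hpos⟩
  have hee1 : ∀ i j, ω (e1 i) (e1 j) = 0 := fun i j => hL₀ _ (he1 i) _ (he1 j)
  obtain ⟨ψ, hω, hψe, hψf⟩ :=
    build_psi hV ω hskew hcard e f e1 f1 hee hff hef hee1 hff1 hef1
  have hmapE : Submodule.map (ψ : V →ₗ[ℝ] V) L₀ = L₀ := by
    conv_lhs => rw [← hspanE]
    rw [ Submodule.map_span, ← Set.range_comp]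
    rw [show (((ψ : V →ₗ[ℝ] V) : V → V) ∘ e) = e1 from funext fun i => hψe i]
    exact hspanE1
  have hmapL : Submodule.map (ψ : V →ₗ[ℝ] V) L = L' := by
    rw [← hspanL, Submodule.map_span, ← Set.range_comp]
    rw [show (((ψ : V →ₗ[ℝ] V) : V → V) ∘ (Sum.elim (e ∘ Sum.inl) (f ∘ Sum.inr)))
        = Sum.elim (e1 ∘ Sum.inl) (f1 ∘ Sum.inr) from
      funext fun m => by cases m <;> simp [hψe, hψf]]
    exact hspanL1
  have hmem : ∀ x ∈ L₀, ψ.toLinearMap x ∈ L₀ := fun x hx => by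
    rw [← hmapE]; exact Submodule.mem_map_of_mem hx
  refine ⟨ψ, hω, hmapE, ⟨hmem, ?_⟩, hmapL⟩
  have hrestrict : ∀ i, (ψ.toLinearMap.restrict hmem) (EL i) = (⟨e1 i, he1 i⟩ : ↥L₀) := by
    intro i
    rw [hELapp i]
    apply Subtype.ext
    rw [LinearMap.restrict_apply]
    exact hψe i
  have hdet : LinearMap.det (ψ.toLinearMap.restrict hmem)
      = EL.det (fun i => ⟨e1 i, he1 i⟩) := by
    rw [← LinearMap.det_toMatrix EL, Basis.det_apply]
    congr 1
    ext i j
    rw [LinearMap.toMatrix_apply, Basis.toMatrix_apply, hrestrict j]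
  rw [hdet]
  exact hdpos
end

section
/- Let (V,ω) be a real symplectic space of dimension 2n. Given any two Lagrangian subspaces L₀ and L of V, there exists a Lagrangian subspace L₁ of V that is a complement of both, i.e. L₁ ∩ L₀ = {0}, L₁ + L₀ = V, L₁ ∩ L = {0}, and L₁ + L = V. -/
/-!
Fix any complement `W` of `L₀`. Since `L₀` is Lagrangian, `ω` pairs `L₀` perfectly with `W`, so a
linear map `τ : W → L₀` is the same as the bilinear form `(x, z) ↦ ω (τ x) z` on `W`, and the graph
`{x + τ x}` is always a complement of `L₀`; it is isotropic exactly when that form has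
antisymmetric part `-ω`. Taking the forms `-½ ω + t g` with `g` positive definite gives a line
`t ↦ Lₜ` of Lagrangian complements of `L₀`. If `Lₛ` and `Lₜ` (`s ≠ t`) meet `L` in
`x + τₛ x` and `y + τₜ y`, then isotropy of `L`, `L₀` and `Lₛ` forces `g x y = 0`; so the nonzero
`x` attached to bad parameters are `g`-orthogonal, hence linearly independent, and only finitely
many `t` are bad.
-/

open Module

section GraphOver

variable {K V : Type*} [Field K] [AddCommGroup V] [Module K V] {W L₀ : Submodule K V}

def graphOver (τ : W →ₗ[K] L₀) : Submodule K V :=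
  LinearMap.range (W.subtype + L₀.subtype ∘ₗ τ)

theorem isCompl_graphOver (hW : IsCompl W L₀) (τ : W →ₗ[K] L₀) :
    IsCompl (graphOver τ) L₀ := by
  constructor
  · rw [Submodule.disjoint_def]
    rintro _ ⟨x, rfl⟩ hv
    have hx : (x : V) ∈ L₀ := by
      simpa using L₀.sub_mem hv (τ x).2
    obtain rfl : x = 0 := Subtype.ext (Submodule.disjoint_def.1 hW.disjoint _ x.2 hx)
    simp
  · rw [codisjoint_iff_le_sup, ← hW.sup_eq_top]
    refine sup_le (fun v hv => ?_) le_sup_right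
    have hgraph : v + τ ⟨v, hv⟩ ∈ graphOver τ := ⟨⟨v, hv⟩, rfl⟩
    simpa using Submodule.sub_mem_sup hgraph (τ ⟨v, hv⟩).2

variable (ω : V →ₗ[K] V →ₗ[K] K)

def IsIsotropic (U : Submodule K V) : Prop :=
  ∀ x ∈ U, ∀ y ∈ U, ω x y = 0

variable {ω}

theorem exists_forall_apply_apply_eq [FiniteDimensional K V] (hnd : ω.SeparatingLeft)
    (hW : IsCompl W L₀) (hL₀ : IsIsotropic ω L₀) (hdim : finrank K L₀ = finrank K W)
    (c : W →ₗ[K] W →ₗ[K] K) : ∃ τ : W →ₗ[K] L₀, ∀ x z : W, ω (τ x) z = c x z := by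
  set A : L₀ →ₗ[K] W →ₗ[K] K := ω.domRestrict₁₂ L₀ W
  have hA_inj : Function.Injective A := by
    refine (injective_iff_map_eq_zero A).2 fun u hu => Subtype.ext (hnd u fun y => ?_)
    have hWker : W ≤ LinearMap.ker (ω u) := fun z hz => LinearMap.congr_fun hu ⟨z, hz⟩
    have hL₀ker : L₀ ≤ LinearMap.ker (ω u) := hL₀ u u.2
    have hker := hW.sup_eq_top ▸ sup_le hWker hL₀ker
    exact hker Submodule.mem_top
  have hA_surj : Function.Surjective A :=
    (LinearMap.injective_iff_surjective_of_finrank_eq_finrank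
      (hdim.trans Subspace.dual_finrank_eq.symm)).1 hA_inj
  obtain ⟨σ, hσ⟩ := A.exists_rightInverse_of_surjective (LinearMap.range_eq_top.2 hA_surj)
  exact ⟨σ ∘ₗ c, fun x z => LinearMap.congr_fun (LinearMap.congr_fun hσ (c x)) z⟩

theorem isIsotropic_graphOver (halt : ω.IsAlt) (hL₀ : IsIsotropic ω L₀) {τ : W →ₗ[K] L₀}
    (hτ : ∀ x y : W, ω (τ x) y - ω (τ y) x = -ω x y) : IsIsotropic ω (graphOver τ) := by
  rintro _ ⟨x, rfl⟩ _ ⟨y, rfl⟩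
  have hskew := halt.neg x (τ y)
  simp only [LinearMap.add_apply, Submodule.subtype_apply, LinearMap.comp_apply, map_add,
    hL₀ _ (τ x).2 _ (τ y).2, add_zero]
  linear_combination hτ x y - hskew

theorem apply_eq_zero_of_add_mem (hL₀ : IsIsotropic ω L₀) {L : Submodule K V}
    (hL : IsIsotropic ω L) {τ σ : W →ₗ[K] L₀} (hτ : IsIsotropic ω (graphOver τ)) {x y : W}
    (hx : (x : V) + τ x ∈ L) (hy : (y : V) + (τ + σ) y ∈ L) : ω (σ y) x = 0 := by
  have hxy := hL _ hy _ hx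
  have hgraph := hτ _ ⟨y, rfl⟩ _ ⟨x, rfl⟩
  have hστ := hL₀ _ (σ y).2 _ (τ x).2
  simp only [LinearMap.add_apply, Submodule.coe_add, map_add, Submodule.subtype_apply,
    LinearMap.comp_apply] at hxy hgraph
  linear_combination hxy - hgraph - hστ

theorem exists_disjoint_graphOver_add_smul [Infinite K] [FiniteDimensional K V]
    (hL₀ : IsIsotropic ω L₀) {L : Submodule K V} (hL : IsIsotropic ω L) {τ₀ τ₁ : W →ₗ[K] L₀}
    (hiso : ∀ t : K, IsIsotropic ω (graphOver (τ₀ + t • τ₁)))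
    (haniso : ∀ x : W, ω (τ₁ x) x = 0 → x = 0) :
    ∃ t : K, Disjoint (graphOver (τ₀ + t • τ₁)) L := by
  by_contra! hbad
  have hmeet (t : K) : ∃ x : W, x ≠ 0 ∧ (x : V) + (τ₀ + t • τ₁) x ∈ L := by
    obtain ⟨v, hv, hv0⟩ := Submodule.exists_mem_ne_zero_of_ne_bot (mt disjoint_iff.2 (hbad t))
    obtain ⟨⟨x, rfl⟩, hvL⟩ := Submodule.mem_inf.1 hv
    refine ⟨x, ?_, hvL⟩
    rintro rfl
    simp at hv0
  choose x hx0 hxL using hmeet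
  have hortho : (ω.compl₁₂ (L₀.subtype ∘ₗ τ₁) W.subtype).IsOrthoᵢ x := by
    intro s t hst
    have hs : (x s : V) + (τ₀ + t • τ₁ + (s - t) • τ₁) (x s) ∈ L := by
      rw [add_assoc, ← add_smul, add_sub_cancel]
      exact hxL s
    have h := apply_eq_zero_of_add_mem hL₀ hL (hiso t) (hxL t) hs
    simpa [sub_ne_zero.2 hst] using h
  exact Module.Finite.not_linearIndependent_of_infinite x
    (LinearMap.linearIndependent_of_isOrthoᵢ hortho fun t => mt (haniso (x t)) (hx0 t))

end GraphOver

theorem exists_bilin_symm_anisotropic (K E : Type*) [Field K] [LinearOrder K] [IsStrictOrderedRing K]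
    [AddCommGroup E] [Module K E] [FiniteDimensional K E] :
    ∃ g : E →ₗ[K] E →ₗ[K] K, (∀ x y, g x y = g y x) ∧ ∀ x, g x x = 0 → x = 0 := by
  set e := (Module.finBasis K E).equivFun
  refine ⟨(dotProductBilin K K).compl₁₂ e.toLinearMap e.toLinearMap,
    fun x y => dotProduct_comm _ _, fun x hx => e.injective ?_⟩
  exact (dotProduct_self_eq_zero (v := e x)).1 hx |>.trans e.map_zero.symm

/-- Given two Lagrangians `L₀` and `L` in a symplectic space `(V,ω)` of dimension `2n`,
there exists a Lagrangian `L₁` complementary to both. -/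
theorem exists_common_complementary_lagrangian
    {V : Type*} [AddCommGroup V] [Module ℝ V] [FiniteDimensional ℝ V]
    {n : ℕ} (hV : Module.finrank ℝ V = 2 * n)
    (ω : V →ₗ[ℝ] V →ₗ[ℝ] ℝ)
    (halt : ∀ x, ω x x = 0)
    (hnd : ∀ x, (∀ y, ω x y = 0) → x = 0)
    (L₀ L : Submodule ℝ V)
    (hL₀dim : Module.finrank ℝ ↥L₀ = n)
    (hL₀ : ∀ x ∈ L₀, ∀ y ∈ L₀, ω x y = 0)
    (hLdim : Module.finrank ℝ ↥L = n)
    (hL : ∀ x ∈ L, ∀ y ∈ L, ω x y = 0) :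
    ∃ L₁ : Submodule ℝ V,
      Module.finrank ℝ ↥L₁ = n ∧
      (∀ x ∈ L₁, ∀ y ∈ L₁, ω x y = 0) ∧
      L₁ ⊓ L₀ = ⊥ ∧ L₁ ⊔ L₀ = ⊤ ∧ L₁ ⊓ L = ⊥ ∧ L₁ ⊔ L = ⊤ := by
  obtain ⟨W, hW⟩ := L₀.exists_isCompl
  replace hW := hW.symm
  have hWdim := Submodule.finrank_add_eq_of_isCompl hW
  obtain ⟨g, hg_symm, hg_aniso⟩ := exists_bilin_symm_anisotropic ℝ W
  obtain ⟨τ₀, hτ₀⟩ := exists_forall_apply_apply_eq hnd hW hL₀ (by omega)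
    (-(2⁻¹ : ℝ) • ω.domRestrict₁₂ W W)
  obtain ⟨τ₁, hτ₁⟩ := exists_forall_apply_apply_eq hnd hW hL₀ (by omega) g
  have hiso (t : ℝ) : IsIsotropic ω (graphOver (τ₀ + t • τ₁)) := by
    refine isIsotropic_graphOver halt hL₀ fun x y => ?_
    simp only [LinearMap.add_apply, LinearMap.smul_apply, Submodule.coe_add, SetLike.val_smul,
      map_add, map_smul, hτ₀, hτ₁, hg_symm x y, LinearMap.domRestrict₁₂_apply, smul_eq_mul]
    linear_combination (-2⁻¹ : ℝ) * LinearMap.IsAlt.neg halt x y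
  obtain ⟨t, ht⟩ := exists_disjoint_graphOver_add_smul hL₀ hL hiso
    fun x hx => hg_aniso x (by rwa [hτ₁] at hx)
  have hcompl := isCompl_graphOver hW (τ₀ + t • τ₁)
  have hdim := Submodule.finrank_add_eq_of_isCompl hcompl
  exact ⟨_, by omega, hiso t, hcompl.inf_eq_bot, hcompl.sup_eq_top, ht.eq_bot,
    Submodule.eq_top_of_disjoint _ _ (by omega) ht⟩
end

section
/- Let k ∈ ℕ and let f : [a,b] → ℝ be of class C^{k+1}. Suppose f(t) ≠ 0 for all t ∈ (a,b), and that f has a zero of order exactly i at a and of order exactly j at b, with 1 ≤ i ≤ k and 1 ≤ j ≤ k (i.e. f^{(m)}(a) = 0 for 0 ≤ m < i, f^{(i)}(a) ≠ 0, and f^{(m)}(b) = 0 for 0 ≤ m < j, f^{(j)}(b) ≠ 0). Then there exists ε > 0 such that every function h : [a,b] → ℝ of class C^{k+1} which has a zero of order exactly i at a and of order exactly j at b, and which satisfies sup_{t∈[a,b]} |h^{(m)}(t) − f^{(m)}(t)| < ε for all 0 ≤ m ≤ k+1, has no zeros in (a,b). -/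
/-!
Write `h = f + u`. Near an endpoint `p` where `f` has a zero of order `n`, both `f` and `u`
vanish to order at least `n`, so Taylor's formula with Lagrange remainder gives
`f x = f⁽ⁿ⁾(ξ) (x - p)ⁿ / n!` and `u x = u⁽ⁿ⁾(η) (x - p)ⁿ / n!`. Close to `p` we have
`|f⁽ⁿ⁾| > |f⁽ⁿ⁾(p)| / 2`, so `|u⁽ⁿ⁾| < |f⁽ⁿ⁾(p)| / 2` forces `|u x| < |f x|` and `h x ≠ 0`.
Away from the endpoints `|f|` is bounded below by compactness, and `|u| < ε` is enough.
-/

open Set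
open scoped Nat

theorem exists_mem_uIoo_eq_iteratedDerivWithin_mul_pow {u : ℝ → ℝ} {s : Set ℝ} {n : ℕ}
    {p x : ℝ} (hs : UniqueDiffOn ℝ s) (hpx : uIcc p x ⊆ s) (hxp : p ≠ x) (hn : n ≠ 0)
    (hu : ContDiffOn ℝ n u s) (hu0 : ∀ m < n, iteratedDerivWithin m u s p = 0) :
    ∃ ξ ∈ uIoo p x, u x = iteratedDerivWithin n u s ξ * (x - p) ^ n / n ! := by
  obtain ⟨n, rfl⟩ := Nat.exists_eq_succ_of_ne_zero hn
  have hI : UniqueDiffOn ℝ (uIcc p x) := uniqueDiffOn_Icc (inf_lt_sup.2 hxp)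
  have hrestrict : ∀ m ≤ n + 1, ∀ y ∈ uIcc p x,
      iteratedDerivWithin m u (uIcc p x) y = iteratedDerivWithin m u s y := fun m hm y hy => by
    simp only [iteratedDerivWithin_eq_iteratedFDerivWithin,
      iteratedFDerivWithin_subset hpx hI hs (hu.of_le (by exact_mod_cast hm)) hy]
  have huI : ContDiffOn ℝ (n + 1 : ℕ) u (uIcc p x) := hu.mono hpx
  obtain ⟨ξ, hξ, hrem⟩ := taylor_mean_remainder_lagrange (n := n) hxp (huI.of_le (by simp))
    ((huI.differentiableOn_iteratedDerivWithin (by exact_mod_cast n.lt_succ_self) hI).mono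
      uIoo_subset_uIcc_self)
  have htaylor : taylorWithinEval u n (uIcc p x) p x = 0 := by
    refine (taylor_within_apply ..).trans (Finset.sum_eq_zero fun m hm => ?_)
    have hm : m < n + 1 := Finset.mem_range.1 hm
    rw [hrestrict m hm.le p left_mem_uIcc, hu0 m hm, smul_zero]
  refine ⟨ξ, hξ, ?_⟩
  rw [← hrestrict _ le_rfl ξ (uIoo_subset_uIcc_self hξ), ← hrem, htaylor, sub_zero]

theorem abs_lt_abs_of_iteratedDerivWithin_lt {u f : ℝ → ℝ} {s : Set ℝ} {n : ℕ} {p x c : ℝ}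
    (hs : UniqueDiffOn ℝ s) (hpx : uIcc p x ⊆ s) (hxp : p ≠ x) (hn : n ≠ 0)
    (hu : ContDiffOn ℝ n u s) (hf : ContDiffOn ℝ n f s)
    (hu0 : ∀ m < n, iteratedDerivWithin m u s p = 0)
    (hf0 : ∀ m < n, iteratedDerivWithin m f s p = 0)
    (hlt : ∀ ξ ∈ uIoo p x, |iteratedDerivWithin n u s ξ| < c)
    (hle : ∀ ξ ∈ uIoo p x, c ≤ |iteratedDerivWithin n f s ξ|) :
    |u x| < |f x| := by
  obtain ⟨η, hη, hueq⟩ := exists_mem_uIoo_eq_iteratedDerivWithin_mul_pow hs hpx hxp hn hu hu0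
  obtain ⟨ξ, hξ, hfeq⟩ := exists_mem_uIoo_eq_iteratedDerivWithin_mul_pow hs hpx hxp hn hf hf0
  have hpos : 0 < |x - p| ^ n / n ! := by
    have : 0 < |x - p| := abs_pos.2 (sub_ne_zero.2 hxp.symm)
    positivity
  have habs : ∀ d : ℝ, |d * (x - p) ^ n / n !| = |d| * (|x - p| ^ n / n !) := fun d => by
    rw [abs_div, abs_mul, abs_pow, Nat.abs_cast, mul_div_assoc]
  calc |u x| = |iteratedDerivWithin n u s η| * (|x - p| ^ n / n !) := by rw [hueq, habs]
    _ < c * (|x - p| ^ n / n !) := mul_lt_mul_of_pos_right (hlt η hη) hpos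
    _ ≤ |iteratedDerivWithin n f s ξ| * (|x - p| ^ n / n !) :=
        mul_le_mul_of_nonneg_right (hle ξ hξ) hpos.le
    _ = |f x| := by rw [hfeq, habs]

theorem exists_forall_ne_zero_near_of_iteratedDerivWithin_ne_zero {f : ℝ → ℝ} {s : Set ℝ}
    {n : ℕ} {p : ℝ} (hs : UniqueDiffOn ℝ s) (hs' : s.OrdConnected) (hp : p ∈ s) (hn : n ≠ 0)
    (hf : ContDiffOn ℝ n f s) (hf0 : ∀ m < n, iteratedDerivWithin m f s p = 0)
    (hfn : iteratedDerivWithin n f s p ≠ 0) :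
    ∃ δ > 0, ∀ h : ℝ → ℝ, ContDiffOn ℝ n h s → (∀ m < n, iteratedDerivWithin m h s p = 0) →
      (∀ ξ ∈ s, |iteratedDerivWithin n h s ξ - iteratedDerivWithin n f s ξ| <
        |iteratedDerivWithin n f s p| / 2) →
      ∀ x ∈ s, x ≠ p → dist x p < δ → h x ≠ 0 := by
  obtain ⟨δ, hδ, hnear⟩ := Metric.continuousWithinAt_iff.1
    (hf.continuousOn_iteratedDerivWithin le_rfl hs p hp) _ (half_pos (abs_pos.2 hfn))
  refine ⟨δ, hδ, fun h hh hh0 hclose x hx hxp hxδ hx0 => ?_⟩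
  have hpx : uIcc p x ⊆ s := hs'.uIcc_subset hp hx
  have hsub : ∀ m ≤ n, ∀ y ∈ s, iteratedDerivWithin m (h - f) s y =
      iteratedDerivWithin m h s y - iteratedDerivWithin m f s y := fun m hm y hy =>
    iteratedDerivWithin_sub hy hs ((hh.of_le (by exact_mod_cast hm)) y hy)
      ((hf.of_le (by exact_mod_cast hm)) y hy)
  have hcmp : |(h - f) x| < |f x| := by
    refine abs_lt_abs_of_iteratedDerivWithin_lt (c := |iteratedDerivWithin n f s p| / 2)
      hs hpx hxp.symm hn (hh.sub hf) hf
      (fun m hm => by rw [hsub m hm.le p hp, hh0 m hm, hf0 m hm, sub_zero]) hf0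
      (fun ξ hξ => ?_) (fun ξ hξ => ?_)
    · rw [hsub n le_rfl ξ (hpx (uIoo_subset_uIcc_self hξ))]
      exact hclose ξ (hpx (uIoo_subset_uIcc_self hξ))
    · have hξδ : dist ξ p < δ := by
        refine lt_of_le_of_lt ?_ hxδ
        rw [dist_comm x]
        exact Real.dist_le_of_mem_uIcc (uIoo_subset_uIcc_self hξ) left_mem_uIcc
      have := hnear (hpx (uIoo_subset_uIcc_self hξ)) hξδ
      rw [Real.dist_eq] at this
      linarith [abs_sub_abs_le_abs_sub (iteratedDerivWithin n f s p)
        (iteratedDerivWithin n f s ξ), abs_sub_comm (iteratedDerivWithin n f s ξ)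
        (iteratedDerivWithin n f s p)]
  rw [Pi.sub_apply, hx0, zero_sub, abs_neg] at hcmp
  exact lt_irrefl _ hcmp

/-- Stability of the nonvanishing of a `C^{k+1}` function on `(a,b)` under `C^{k+1}`-small
perturbations with zeroes of the same exact orders at the endpoints. -/
theorem no_interior_zeros_of_small_perturbation
    {k : ℕ} {a b : ℝ} (hab : a < b) (f : ℝ → ℝ)
    (hf : ContDiffOn ℝ (k + 1) f (Icc a b))
    (i j : ℕ) (hi1 : 1 ≤ i) (hik : i ≤ k) (hj1 : 1 ≤ j) (hjk : j ≤ k)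
    (hfa : ∀ m < i, iteratedDerivWithin m f (Icc a b) a = 0)
    (hfa' : iteratedDerivWithin i f (Icc a b) a ≠ 0)
    (hfb : ∀ m < j, iteratedDerivWithin m f (Icc a b) b = 0)
    (hfb' : iteratedDerivWithin j f (Icc a b) b ≠ 0)
    (hfne : ∀ t ∈ Ioo a b, f t ≠ 0) :
    ∃ ε > 0, ∀ h : ℝ → ℝ, ContDiffOn ℝ (k + 1) h (Icc a b) →
      (∀ m < i, iteratedDerivWithin m h (Icc a b) a = 0) →
      iteratedDerivWithin i h (Icc a b) a ≠ 0 →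
      (∀ m < j, iteratedDerivWithin m h (Icc a b) b = 0) →
      iteratedDerivWithin j h (Icc a b) b ≠ 0 →
      (∀ m ≤ k + 1, ∀ t ∈ Icc a b,
        |iteratedDerivWithin m h (Icc a b) t - iteratedDerivWithin m f (Icc a b) t| < ε) →
      ∀ t ∈ Ioo a b, h t ≠ 0 := by
  have hud := uniqueDiffOn_Icc hab
  have hik1 : i ≤ k + 1 := hik.trans k.le_succ
  have hjk1 : j ≤ k + 1 := hjk.trans k.le_succ
  obtain ⟨δa, hδa, near_a⟩ :=
    exists_forall_ne_zero_near_of_iteratedDerivWithin_ne_zero hud ordConnected_Icc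
      (left_mem_Icc.2 hab.le) (by omega) (hf.of_le (by exact_mod_cast hik1)) hfa hfa'
  obtain ⟨δb, hδb, near_b⟩ :=
    exists_forall_ne_zero_near_of_iteratedDerivWithin_ne_zero hud ordConnected_Icc
      (right_mem_Icc.2 hab.le) (by omega) (hf.of_le (by exact_mod_cast hjk1)) hfb hfb'
  have hmid : Icc (a + δa) (b - δb) ⊆ Ioo a b := fun t ht =>
    ⟨by linarith [ht.1], by linarith [ht.2]⟩
  obtain ⟨μ, hμ, hfμ⟩ := isCompact_Icc.exists_forall_le'
    (hf.continuousOn.abs.mono (hmid.trans Ioo_subset_Icc_self))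
    fun t ht => abs_pos.2 (hfne t (hmid ht))
  refine ⟨min (min (|iteratedDerivWithin i f (Icc a b) a| / 2)
    (|iteratedDerivWithin j f (Icc a b) b| / 2)) μ,
    lt_min (lt_min (half_pos (abs_pos.2 hfa')) (half_pos (abs_pos.2 hfb'))) hμ,
    fun h hh hha _ hhb _ hclose t ht => ?_⟩
  have htI : t ∈ Icc a b := Ioo_subset_Icc_self ht
  rcases lt_or_ge (t - a) δa with hta | hta
  · refine near_a h (hh.of_le (by exact_mod_cast hik1)) hha
      (fun ξ hξ => (hclose i hik1 ξ hξ).trans_le ((min_le_left _ _).trans (min_le_left _ _)))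
      t htI ht.1.ne' ?_
    rwa [Real.dist_eq, abs_of_pos (sub_pos.2 ht.1)]
  rcases lt_or_ge (b - t) δb with htb | htb
  · refine near_b h (hh.of_le (by exact_mod_cast hjk1)) hhb
      (fun ξ hξ => (hclose j hjk1 ξ hξ).trans_le ((min_le_left _ _).trans (min_le_right _ _)))
      t htI ht.2.ne ?_
    rwa [Real.dist_eq, abs_of_neg (sub_neg.2 ht.2), neg_sub]
  intro ht0
  have hsmall := hclose 0 (Nat.zero_le _) t htI
  rw [iteratedDerivWithin_zero, iteratedDerivWithin_zero, ht0, zero_sub, abs_neg] at hsmall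
  exact (hsmall.trans_le (min_le_right _ _)).not_ge (hfμ t ⟨by linarith, by linarith⟩)
end

section
/- Let (g,R,P,S) be an admissible quadruple for the differential problem in ℝⁿ on [a,b]. Then for every t₀ ∈ [a,b], the set {J'(t₀) : J is a (P,S)-solution with J(t₀) = 0} equals the g-orthogonal complement of 𝕁[t₀] = {J(t₀) : J ∈ 𝕁} in ℝⁿ, i.e. it equals {x ∈ ℝⁿ : g(x, w) = 0 for all w ∈ 𝕁[t₀]}. -/
open Set

/-!
Write a solution of `J'' = R J` as the curve `t ↦ (J t, J' t)` in `ℝⁿ × ℝⁿ`, an integral curve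
of a linear first-order system. Existence and uniqueness for that system make the propagator from
`a` to `t₀` a linear isomorphism, so the jets `(J t₀, J' t₀)` of the `(P,S)`-solutions form an
`n`-dimensional subspace `M`, the image of the initial data `{(x, y) | x ∈ P, y + S x ∈ P^⊥}`.
The symmetry of `R` makes the Wronskian `g(J₁', J₂) - g(J₁, J₂')` constant and the symmetry of `S`
makes it vanish at `a`, so `M` is Lagrangian. For a Lagrangian `M` a dimension count gives
`{y | (0, y) ∈ M} = (fst M)^⊥`, and `fst M = 𝕁[t₀]`.
-/

open Module
open scoped NNReal

section Lagrangian

variable {K V : Type*} [Field K] [AddCommGroup V] [Module K V]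

/-- Lagrangian for the symplectic form `((x, y), (x', y')) ↦ g y x' - g x y'` on `V × V`. -/
def IsLagrangian (g : LinearMap.BilinForm K V) (M : Submodule K (V × V)) : Prop :=
  finrank K M = finrank K V ∧ ∀ u ∈ M, ∀ w ∈ M, g u.2 w.1 = g u.1 w.2

theorem IsLagrangian.mk_zero_mem_iff [FiniteDimensional K V] {g : LinearMap.BilinForm K V}
    {M : Submodule K (V × V)} (hM : IsLagrangian g M) (hg : g.Nondegenerate) (y : V) :
    ((0 : V), y) ∈ M ↔ ∀ u ∈ M, g u.1 y = 0 := by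
  refine ⟨fun hy u hu => by simpa using (hM.2 u hu _ hy).symm, fun hy => ?_⟩
  -- `{y | (0, y) ∈ M}` is isotropic to `fst M` and has dimension `dim M - dim (fst M)`
  let f : M →ₗ[K] V := LinearMap.fst K V V ∘ₗ M.subtype
  let h : LinearMap.ker f →ₗ[K] V := LinearMap.snd K V V ∘ₗ M.subtype ∘ₗ (LinearMap.ker f).subtype
  have h_inj : Function.Injective h := by
    intro m₁ m₂ hm
    exact Subtype.ext (Subtype.ext (Prod.ext (m₁.2.trans m₂.2.symm) hm))
  have h_le : LinearMap.range h ≤ g.orthogonal (LinearMap.range f) := by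
    rintro _ ⟨m, rfl⟩ _ ⟨u, rfl⟩
    have hm0 : ((m : M) : V × V) = (0, h m) := Prod.ext m.2 rfl
    simpa [hm0, f] using (hM.2 u u.2 _ (m : M).2).symm
  have h_eq : LinearMap.range h = g.orthogonal (LinearMap.range f) := by
    refine Submodule.eq_of_le_of_finrank_le h_le ?_
    rw [LinearMap.finrank_range_of_inj h_inj, g.finrank_orthogonal hg, ← hM.1,
      ← LinearMap.finrank_range_add_finrank_ker f]
    omega
  obtain ⟨m, hm⟩ : y ∈ LinearMap.range h := h_eq ▸ fun _ ⟨u, hu⟩ => hu ▸ hy u u.2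
  have hm0 : ((m : M) : V × V) = (0, y) := Prod.ext m.2 hm
  exact hm0 ▸ (m : M).2

end Lagrangian

theorem Submodule.finrank_prod {K V W : Type*} [Field K] [AddCommGroup V] [Module K V]
    [AddCommGroup W] [Module K W] [FiniteDimensional K V] [FiniteDimensional K W]
    (p : Submodule K V) (q : Submodule K W) :
    finrank K (p.prod q) = finrank K p + finrank K q := by
  have hrange : p.prod q = LinearMap.range (p.subtype.prodMap q.subtype) := by
    ext ⟨x, y⟩
    simp only [Submodule.mem_prod, LinearMap.mem_range, LinearMap.prodMap_apply, Prod.mk.injEq]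
    exact ⟨fun h => ⟨(⟨x, h.1⟩, ⟨y, h.2⟩), rfl, rfl⟩, by rintro ⟨⟨x', y'⟩, rfl, rfl⟩; simp⟩
  rw [hrange, LinearMap.finrank_range_of_inj
    (p.injective_subtype.prodMap q.injective_subtype), Module.finrank_prod]

section InitialSubspace

variable {K V : Type*} [Field K] [AddCommGroup V] [Module K V]
  (g : LinearMap.BilinForm K V) (P : Submodule K V) (S : V →ₗ[K] V)

def initialSubspace : Submodule K (V × V) :=
  (P.prod (g.flip.orthogonal P)).comap
    (LinearEquiv.skewProd (.refl K V) (.refl K V) S).toLinearMap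

variable {g P S}

theorem mem_initialSubspace {u : V × V} :
    u ∈ initialSubspace g P S ↔ u.1 ∈ P ∧ ∀ p ∈ P, g (u.2 + S u.1) p = 0 := Iff.rfl

theorem finrank_initialSubspace [FiniteDimensional K V] (hg : g.Nondegenerate) :
    finrank K (initialSubspace g P S) = finrank K V := by
  rw [initialSubspace, Submodule.comap_equiv_eq_map_symm, LinearEquiv.finrank_map_eq,
    Submodule.finrank_prod, LinearMap.BilinForm.finrank_orthogonal hg.flip]
  have := P.finrank_le
  omega

theorem initialSubspace_isotropic (hgsymm : ∀ x y, g x y = g y x)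
    (hS : ∀ x ∈ P, ∀ y ∈ P, g (S x) y = g x (S y)) {u w : V × V}
    (hu : u ∈ initialSubspace g P S) (hw : w ∈ initialSubspace g P S) :
    g u.2 w.1 = g u.1 w.2 := by
  rw [mem_initialSubspace] at hu hw
  have h₁ := hu.2 w.1 hw.1
  have h₂ := hw.2 u.1 hu.1
  rw [map_add, LinearMap.add_apply] at h₁ h₂
  rw [hgsymm w.2, hgsymm (S w.1)] at h₂
  linear_combination h₁ - h₂ - hS u.1 hu.1 w.1 hw.1

end InitialSubspace

theorem IsCompact.exists_nnnorm_le_of_continuousOn {X F : Type*} [TopologicalSpace X]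
    [SeminormedAddGroup F] {K : Set X} {f : X → F} (hK : IsCompact K) (hf : ContinuousOn f K) :
    ∃ C : ℝ≥0, ∀ x ∈ K, ‖f x‖₊ ≤ C := by
  obtain ⟨C, hC⟩ := hK.exists_bound_of_continuousOn hf
  exact ⟨C.toNNReal, fun x hx => by
    rw [← NNReal.coe_le_coe, coe_nnnorm]; exact (hC x hx).trans (le_max_left _ _)⟩

section Gluing

variable {E : Type*} [NormedAddCommGroup E] [NormedSpace ℝ E]

theorem IsIntegralCurveOn.piecewise_Iic {γ₁ γ₂ : ℝ → E} {v : ℝ → E → E} {c m d : ℝ}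
    (h₁ : IsIntegralCurveOn γ₁ v (Icc c m)) (h₂ : IsIntegralCurveOn γ₂ v (Icc m d))
    (hcm : c ≤ m) (hmd : m ≤ d) (hm : γ₁ m = γ₂ m) :
    IsIntegralCurveOn ((Iic m).piecewise γ₁ γ₂) v (Icc c d) := by
  set γ := (Iic m).piecewise γ₁ γ₂
  have eq₁ : EqOn γ γ₁ (Icc c m) := fun t ht => piecewise_eq_of_mem _ _ _ ht.2
  have eq₂ : EqOn γ γ₂ (Icc m d) := by
    intro t ht
    rcases ht.1.eq_or_lt with rfl | hlt
    · exact (eq₁ ⟨hcm, le_rfl⟩).trans hm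
    · exact piecewise_eq_of_notMem _ _ _ (not_le.2 hlt)
  intro t ht
  rw [← Icc_union_Icc_eq_Icc hcm hmd]
  refine HasDerivWithinAt.union ?_ ?_
  · by_cases htm : t ≤ m
    · rw [eq₁ ⟨ht.1, htm⟩]
      exact (h₁ t ⟨ht.1, htm⟩).congr eq₁ (eq₁ ⟨ht.1, htm⟩)
    · exact HasFDerivWithinAt.of_notMem_closure (by rw [closure_Icc]; exact fun h => htm h.2)
  · by_cases hmt : m ≤ t
    · rw [eq₂ ⟨hmt, ht.2⟩]
      exact (h₂ t ⟨hmt, ht.2⟩).congr eq₂ (eq₂ ⟨hmt, ht.2⟩)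
    · exact HasFDerivWithinAt.of_notMem_closure (by rw [closure_Icc]; exact fun h => hmt h.1)

end Gluing

section LinearODE

variable {E : Type*} [NormedAddCommGroup E] [NormedSpace ℝ E] {A : ℝ → E →L[ℝ] E}
  {γ η : ℝ → E} {s : Set ℝ}

theorem IsIntegralCurveOn.add_of_clm (hγ : IsIntegralCurveOn γ (fun t => A t) s)
    (hη : IsIntegralCurveOn η (fun t => A t) s) :
    IsIntegralCurveOn (γ + η) (fun t => A t) s := fun t ht => by
  simpa using (hγ t ht).add (hη t ht)

theorem IsIntegralCurveOn.const_smul_of_clm (hγ : IsIntegralCurveOn γ (fun t => A t) s)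
    (c : ℝ) : IsIntegralCurveOn (c • γ) (fun t => A t) s := fun t ht => by
  simpa using (hγ t ht).const_smul c

theorem IsIntegralCurveOn.eqOn_Icc_of_clm {a b t₁ : ℝ} (hA : ContinuousOn A (Icc a b))
    (hγ : IsIntegralCurveOn γ (fun t => A t) (Icc a b))
    (hη : IsIntegralCurveOn η (fun t => A t) (Icc a b))
    (ht₁ : t₁ ∈ Icc a b) (h : γ t₁ = η t₁) : EqOn γ η (Icc a b) := by
  obtain ⟨K, hK⟩ := isCompact_Icc.exists_nnnorm_le_of_continuousOn hA
  have hlip : ∀ t ∈ Icc a b, LipschitzOnWith K (A t) univ :=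
    fun t ht => ((A t).lipschitz.weaken (hK t ht)).lipschitzOnWith
  have right : ∀ {ζ : ℝ → E}, IsIntegralCurveOn ζ (fun t => A t) (Icc a b) →
      ∀ t ∈ Ico t₁ b, HasDerivWithinAt ζ (A t (ζ t)) (Ici t) t := fun hζ t ht =>
    (hζ t ⟨ht₁.1.trans ht.1, ht.2.le⟩).mono_of_mem_nhdsWithin
      (Filter.mem_of_superset (Icc_mem_nhdsGE ht.2) (Icc_subset_Icc_left (ht₁.1.trans ht.1)))
  have left : ∀ {ζ : ℝ → E}, IsIntegralCurveOn ζ (fun t => A t) (Icc a b) →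
      ∀ t ∈ Ioc a t₁, HasDerivWithinAt ζ (A t (ζ t)) (Iic t) t := fun hζ t ht =>
    (hζ t ⟨ht.1.le, ht.2.trans ht₁.2⟩).mono_of_mem_nhdsWithin
      (Filter.mem_of_superset (Icc_mem_nhdsLE ht.1) (Icc_subset_Icc_right (ht.2.trans ht₁.2)))
  rw [← Icc_union_Icc_eq_Icc ht₁.1 ht₁.2]
  refine EqOn.union ?_ ?_
  · exact ODE_solution_unique_of_mem_Icc_left
      (fun t ht => hlip t ⟨ht.1.le, ht.2.trans ht₁.2⟩)
      (hγ.continuousOn.mono (Icc_subset_Icc_right ht₁.2)) (left hγ) (fun _ _ => mem_univ _)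
      (hη.continuousOn.mono (Icc_subset_Icc_right ht₁.2)) (left hη) (fun _ _ => mem_univ _) h
  · exact ODE_solution_unique_of_mem_Icc_right
      (fun t ht => hlip t ⟨ht₁.1.trans ht.1, ht.2.le⟩)
      (hγ.continuousOn.mono (Icc_subset_Icc_left ht₁.1)) (right hγ) (fun _ _ => mem_univ _)
      (hη.continuousOn.mono (Icc_subset_Icc_left ht₁.1)) (right hη) (fun _ _ => mem_univ _) h

variable [CompleteSpace E]

theorem exists_isIntegralCurveOn_Icc_of_mul_le {c d : ℝ} {K : ℝ≥0}
    (hA : ContinuousOn A (Icc c d)) (hK : ∀ t ∈ Icc c d, ‖A t‖₊ ≤ K) (hcd : c ≤ d)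
    (hsmall : 2 * K * (d - c) ≤ 1) (x : E) :
    ∃ γ : ℝ → E, γ c = x ∧ IsIntegralCurveOn γ (fun t => A t) (Icc c d) := by
  have hK' : ∀ t ∈ Icc c d, ‖A t‖ ≤ K := fun t ht => hK t ht
  -- on the ball of radius `‖x‖ + 1` around `x` the field is bounded by `K (2 ‖x‖ + 1)`
  have hpl : IsPicardLindelof (fun t => A t) (tmin := c) (tmax := d) ⟨c, le_rfl, hcd⟩ x
      (‖x‖₊ + 1) 0 (K * (2 * ‖x‖₊ + 1)) K := by
    refine ⟨fun t ht => ((A t).lipschitz.weaken (hK t ht)).lipschitzOnWith,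
      fun y _ => hA.clm_apply continuousOn_const, fun t ht y hy => ?_, ?_⟩
    · have hy' : ‖y‖ ≤ 2 * ‖x‖ + 1 := by
        have := mem_closedBall_iff_norm.1 hy
        have := norm_le_insert' y x
        push_cast at *
        linarith
      push_cast
      calc ‖A t y‖ ≤ ‖A t‖ * ‖y‖ := (A t).le_opNorm y
        _ ≤ K * (2 * ‖x‖ + 1) := mul_le_mul (hK' t ht) hy' (norm_nonneg _) K.2
    · push_cast
      rw [sub_self, max_eq_left (sub_nonneg.2 hcd), sub_zero]
      nlinarith [norm_nonneg x, K.2]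
  exact hpl.exists_eq_forall_mem_Icc_hasDerivWithinAt₀

theorem exists_isIntegralCurveOn_Icc_of_clm {a b : ℝ} (hA : ContinuousOn A (Icc a b)) (x : E) :
    ∃ γ : ℝ → E, γ a = x ∧ IsIntegralCurveOn γ (fun t => A t) (Icc a b) := by
  rcases lt_or_ge b a with hba | hab
  · exact ⟨fun _ => x, rfl, by simp [Icc_eq_empty_of_lt hba, IsIntegralCurveOn]⟩
  obtain ⟨K, hK⟩ := isCompact_Icc.exists_nnnorm_le_of_continuousOn hA
  set δ : ℝ := 1 / (2 * K + 1)
  have hδ : 0 < δ := by positivity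
  have hKδ : 2 * K * δ ≤ 1 := by
    rw [mul_one_div, div_le_one (by positivity)]; linarith
  suffices H : ∀ k : ℕ, ∀ c ∈ Icc a b, b - c ≤ k * δ → ∀ x : E,
      ∃ γ : ℝ → E, γ c = x ∧ IsIntegralCurveOn γ (fun t => A t) (Icc c b) by
    obtain ⟨k, hk⟩ := exists_nat_ge ((b - a) / δ)
    exact H k a ⟨le_rfl, hab⟩ (by rwa [div_le_iff₀ hδ] at hk) x
  intro k
  induction k with
  | zero =>
    intro c hc hcb x
    obtain rfl : c = b := le_antisymm hc.2 (by simpa using hcb)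
    exact exists_isIntegralCurveOn_Icc_of_mul_le (hA.mono (Icc_subset_Icc hc.1 le_rfl))
      (fun t ht => hK t (Icc_subset_Icc hc.1 le_rfl ht)) le_rfl (by simp) x
  | succ k ih =>
    intro c hc hcb x
    set m := min (c + δ) b
    have hcm : c ≤ m := le_min (by linarith) hc.2
    have hmb : m ≤ b := min_le_right _ _
    have hIcc : Icc c m ⊆ Icc a b := Icc_subset_Icc hc.1 hmb
    obtain ⟨γ₁, hγ₁c, hγ₁⟩ := exists_isIntegralCurveOn_Icc_of_mul_le (hA.mono hIcc)
      (fun t ht => hK t (hIcc ht)) hcm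
      (hKδ.trans' (mul_le_mul_of_nonneg_left (sub_le_iff_le_add'.2 (min_le_left _ _))
        (by positivity))) x
    obtain ⟨γ₂, hγ₂m, hγ₂⟩ := ih m ⟨hc.1.trans hcm, hmb⟩
      (by push_cast at hcb; rcases min_cases (c + δ) b with ⟨h, -⟩ | ⟨h, -⟩ <;>
        simp only [m, h] <;> nlinarith) (γ₁ m)
    exact ⟨_, by simp [piecewise_eq_of_mem _ _ _ (show c ∈ Iic m from hcm), hγ₁c],
      hγ₁.piecewise_Iic hγ₂ hcm hmb hγ₂m.symm⟩

theorem exists_linearMap_forall_isIntegralCurveOn_eq {a b t₀ : ℝ} (hA : ContinuousOn A (Icc a b))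
    (ht₀ : t₀ ∈ Icc a b) :
    ∃ Φ : E →ₗ[ℝ] E, Function.Injective Φ ∧
      ∀ γ, IsIntegralCurveOn γ (fun t => A t) (Icc a b) → γ t₀ = Φ (γ a) := by
  have ha : a ∈ Icc a b := ⟨le_rfl, ht₀.1.trans ht₀.2⟩
  choose sol hsol_a hsol using exists_isIntegralCurveOn_Icc_of_clm hA
  have eval_eq : ∀ γ, IsIntegralCurveOn γ (fun t => A t) (Icc a b) → γ t₀ = sol (γ a) t₀ :=
    fun γ hγ => hγ.eqOn_Icc_of_clm hA (hsol _) ha (hsol_a _).symm ht₀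
  let Φ : E →ₗ[ℝ] E :=
    { toFun := fun x => sol x t₀
      map_add' := fun x y => by
        simpa [hsol_a] using (eval_eq _ ((hsol x).add_of_clm (hsol y))).symm
      map_smul' := fun c x => by
        simpa [hsol_a] using (eval_eq _ ((hsol x).const_smul_of_clm c)).symm }
  refine ⟨Φ, fun x y hxy => ?_, eval_eq⟩
  simpa [hsol_a] using (hsol x).eqOn_Icc_of_clm hA (hsol y) ht₀ hxy ha

theorem exists_submodule_mem_iff_isIntegralCurveOn {a b t₀ : ℝ} (hA : ContinuousOn A (Icc a b))
    (ht₀ : t₀ ∈ Icc a b) (B : Submodule ℝ E) :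
    ∃ M : Submodule ℝ E, finrank ℝ M = finrank ℝ B ∧ ∀ u, u ∈ M ↔
      ∃ γ, IsIntegralCurveOn γ (fun t => A t) (Icc a b) ∧ γ a ∈ B ∧ γ t₀ = u := by
  obtain ⟨Φ, hΦ, hΦγ⟩ := exists_linearMap_forall_isIntegralCurveOn_eq hA ht₀
  refine ⟨B.map Φ, (Submodule.equivMapOfInjective Φ hΦ B).finrank_eq.symm, fun u => ?_⟩
  constructor
  · rintro ⟨x, hx, rfl⟩
    obtain ⟨γ, hγa, hγ⟩ := exists_isIntegralCurveOn_Icc_of_clm hA x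
    exact ⟨γ, hγ, hγa ▸ hx, hγa ▸ hΦγ γ hγ⟩
  · rintro ⟨γ, hγ, hγa, rfl⟩
    exact ⟨γ a, hγa, (hΦγ γ hγ).symm⟩

end LinearODE

section Companion

variable {E : Type*} [NormedAddCommGroup E] [NormedSpace ℝ E] {A : ℝ → E →L[ℝ] E}
  {γ η : ℝ → E × E} {a b t : ℝ}

def companion (A : ℝ → E →L[ℝ] E) (t : ℝ) : E × E →L[ℝ] E × E :=
  (ContinuousLinearMap.snd ℝ E E).prod ((A t).comp (ContinuousLinearMap.fst ℝ E E))

@[simp]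
theorem companion_apply (u : E × E) : companion A t u = (u.2, A t u.1) := rfl

theorem ContinuousOn.companion {s : Set ℝ} (hA : ContinuousOn A s) :
    ContinuousOn (companion A) s :=
  (ContinuousLinearMap.prodₗᵢ ℝ).continuous.comp_continuousOn
    (continuousOn_const.prodMk (hA.clm_comp continuousOn_const))

theorem IsIntegralCurveOn.hasDerivWithinAt_fst {s : Set ℝ}
    (hγ : IsIntegralCurveOn γ (fun t => companion A t) s) (ht : t ∈ s) :
    HasDerivWithinAt (fun t => (γ t).1) (γ t).2 s t :=
  (ContinuousLinearMap.fst ℝ E E).hasFDerivAt.comp_hasDerivWithinAt t (hγ t ht)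

theorem IsIntegralCurveOn.hasDerivWithinAt_snd {s : Set ℝ}
    (hγ : IsIntegralCurveOn γ (fun t => companion A t) s) (ht : t ∈ s) :
    HasDerivWithinAt (fun t => (γ t).2) (A t (γ t).1) s t :=
  (ContinuousLinearMap.snd ℝ E E).hasFDerivAt.comp_hasDerivWithinAt t (hγ t ht)

theorem IsIntegralCurveOn.derivWithin_fst (hab : a < b)
    (hγ : IsIntegralCurveOn γ (fun t => companion A t) (Icc a b)) (ht : t ∈ Icc a b) :
    derivWithin (fun t => (γ t).1) (Icc a b) t = (γ t).2 :=
  (hγ.hasDerivWithinAt_fst ht).derivWithin (uniqueDiffOn_Icc hab t ht)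

theorem IsIntegralCurveOn.contDiffOn_fst (hab : a < b) (hA : ContinuousOn A (Icc a b))
    (hγ : IsIntegralCurveOn γ (fun t => companion A t) (Icc a b)) :
    ContDiffOn ℝ 2 (fun t => (γ t).1) (Icc a b) := by
  have hud := uniqueDiffOn_Icc hab
  have hγ_C1 : ContDiffOn ℝ 1 γ (Icc a b) := by
    refine (contDiffOn_one_iff_derivWithin hud).2
      ⟨fun t ht => (hγ t ht).differentiableWithinAt, ?_⟩
    exact (hA.companion.clm_apply hγ.continuousOn).congr fun t ht =>
      (hγ t ht).derivWithin (hud t ht)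
  rw [show (2 : WithTop ℕ∞) = 1 + 1 from rfl, contDiffOn_succ_iff_derivWithin hud]
  refine ⟨fun t ht => (hγ.hasDerivWithinAt_fst ht).differentiableWithinAt, by simp, ?_⟩
  exact (contDiff_snd.comp_contDiffOn hγ_C1).congr fun t ht => hγ.derivWithin_fst hab ht

theorem IsIntegralCurveOn.derivWithin_derivWithin_fst (hab : a < b)
    (hγ : IsIntegralCurveOn γ (fun t => companion A t) (Icc a b)) (ht : t ∈ Icc a b) :
    derivWithin (derivWithin (fun t => (γ t).1) (Icc a b)) (Icc a b) t = A t (γ t).1 := by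
  rw [derivWithin_congr (fun s hs => hγ.derivWithin_fst hab hs) (hγ.derivWithin_fst hab ht)]
  exact (hγ.hasDerivWithinAt_snd ht).derivWithin (uniqueDiffOn_Icc hab t ht)

theorem IsIntegralCurveOn.wronskian_eq (B : E →L[ℝ] E →L[ℝ] ℝ)
    (hB : ∀ t ∈ Icc a b, ∀ x y, B (A t x) y = B x (A t y))
    (hγ : IsIntegralCurveOn γ (fun t => companion A t) (Icc a b))
    (hη : IsIntegralCurveOn η (fun t => companion A t) (Icc a b)) (ht : t ∈ Icc a b) :
    B (γ t).2 (η t).1 - B (γ t).1 (η t).2 = B (γ a).2 (η a).1 - B (γ a).1 (η a).2 := by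
  have hderiv : ∀ t ∈ Icc a b, HasDerivWithinAt
      (fun t => B (γ t).2 (η t).1 - B (γ t).1 (η t).2) 0 (Icc a b) t := by
    intro t ht
    have h := (B.hasDerivWithinAt_of_bilinear (hγ.hasDerivWithinAt_snd ht)
      (hη.hasDerivWithinAt_fst ht)).sub
      (B.hasDerivWithinAt_of_bilinear (hγ.hasDerivWithinAt_fst ht) (hη.hasDerivWithinAt_snd ht))
    rwa [hB t ht, add_comm (B (γ t).1 _), sub_self] at h
  refine constant_of_has_deriv_right_zero (fun t ht => (hderiv t ht).continuousWithinAt)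
    (fun t ht => (hderiv t (Ico_subset_Icc_self ht)).mono_of_mem_nhdsWithin ?_) t ht
  exact Filter.mem_of_superset (Icc_mem_nhdsGE ht.2) (Icc_subset_Icc_left ht.1)

end Companion

section Jacobi

variable {n : ℕ} {g : (Fin n → ℝ) →ₗ[ℝ] (Fin n → ℝ) →ₗ[ℝ] ℝ}
  {R : ℝ → (Fin n → ℝ) →L[ℝ] (Fin n → ℝ)} {P : Submodule ℝ (Fin n → ℝ)}
  {S : (Fin n → ℝ) →ₗ[ℝ] (Fin n → ℝ)} {a b : ℝ}

theorem IsPSSolution.isIntegralCurveOn (hab : a < b) {J : ℝ → Fin n → ℝ}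
    (hJ : IsPSSolution g R P S a b J) :
    IsIntegralCurveOn (fun t => (J t, derivWithin J (Icc a b) t)) (fun t => companion R t)
      (Icc a b) := by
  obtain ⟨hJ2, hJ'', -, -⟩ := hJ
  have hud := uniqueDiffOn_Icc hab
  intro t ht
  have hJ' : DifferentiableOn ℝ (derivWithin J (Icc a b)) (Icc a b) :=
    (hJ2.derivWithin (m := 1) hud (by norm_num)).differentiableOn one_ne_zero
  have h := ((hJ2.differentiableOn (by norm_num)) t ht).hasDerivWithinAt.prodMk
    (hJ' t ht).hasDerivWithinAt
  rwa [hJ'' t ht] at h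

theorem IsPSSolution.mem_initialSubspace {J : ℝ → Fin n → ℝ} (hJ : IsPSSolution g R P S a b J) :
    (J a, derivWithin J (Icc a b) a) ∈ initialSubspace g P S :=
  ⟨hJ.2.2.1, hJ.2.2.2⟩

theorem IsIntegralCurveOn.isPSSolution_fst (hab : a < b) (hR : ContinuousOn R (Icc a b))
    {γ : ℝ → (Fin n → ℝ) × (Fin n → ℝ)}
    (hγ : IsIntegralCurveOn γ (fun t => companion R t) (Icc a b))
    (ha : γ a ∈ initialSubspace g P S) :
    IsPSSolution g R P S a b (fun t => (γ t).1) := by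
  refine ⟨hγ.contDiffOn_fst hab hR, fun t ht => hγ.derivWithin_derivWithin_fst hab ht, ha.1, ?_⟩
  rw [hγ.derivWithin_fst hab (left_mem_Icc.2 hab.le)]
  exact ha.2

theorem exists_isLagrangian_jets (hab : a < b) (hg : g.Nondegenerate)
    (hgsymm : ∀ x y, g x y = g y x) (hR : ContinuousOn R (Icc a b))
    (hRsymm : ∀ t ∈ Icc a b, ∀ x y, g (R t x) y = g x (R t y))
    (hSsymm : ∀ x ∈ P, ∀ y ∈ P, g (S x) y = g x (S y)) {t₀ : ℝ} (ht₀ : t₀ ∈ Icc a b) :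
    ∃ M : Submodule ℝ ((Fin n → ℝ) × (Fin n → ℝ)), IsLagrangian g M ∧
      ∀ u, u ∈ M ↔ ∃ J, IsPSSolution g R P S a b J ∧ (J t₀, derivWithin J (Icc a b) t₀) = u := by
  obtain ⟨M, hMrank, hM⟩ :=
    exists_submodule_mem_iff_isIntegralCurveOn hR.companion ht₀ (initialSubspace g P S)
  let G : (Fin n → ℝ) →L[ℝ] (Fin n → ℝ) →L[ℝ] ℝ :=
    LinearMap.toContinuousLinearMap (LinearMap.toContinuousLinearMap.toLinearMap ∘ₗ g)
  refine ⟨M, ⟨hMrank.trans (finrank_initialSubspace hg), fun u hu w hw => ?_⟩, fun u => ?_⟩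
  · obtain ⟨γ, hγ, hγa, rfl⟩ := (hM u).1 hu
    obtain ⟨η, hη, hηa, rfl⟩ := (hM w).1 hw
    have hW : g (γ t₀).2 (η t₀).1 - g (γ t₀).1 (η t₀).2 = g (γ a).2 (η a).1 - g (γ a).1 (η a).2 :=
      hγ.wronskian_eq G hRsymm hη ht₀
    rwa [initialSubspace_isotropic hgsymm hSsymm hγa hηa, sub_self, sub_eq_zero] at hW
  · rw [hM]
    constructor
    · rintro ⟨γ, hγ, hγa, rfl⟩
      exact ⟨_, hγ.isPSSolution_fst hab hR hγa, by rw [hγ.derivWithin_fst hab ht₀]⟩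
    · rintro ⟨J, hJ, rfl⟩
      exact ⟨_, hJ.isIntegralCurveOn hab, hJ.mem_initialSubspace, rfl⟩

end Jacobi

theorem derivs_of_vanishing_solutions_eq_orthogonal_general {n : ℕ}
    (g : (Fin n → ℝ) →ₗ[ℝ] (Fin n → ℝ) →ₗ[ℝ] ℝ)
    (R : ℝ → (Fin n → ℝ) →L[ℝ] (Fin n → ℝ))
    (P : Submodule ℝ (Fin n → ℝ)) (S : (Fin n → ℝ) →ₗ[ℝ] (Fin n → ℝ))
    (a b : ℝ) (hab : a < b)
    (hgsymm : ∀ x y, g x y = g y x)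
    (hgnd : ∀ x, (∀ y, g x y = 0) → x = 0)
    (hRcont : ContinuousOn R (Icc a b))
    (hRsymm : ∀ t ∈ Icc a b, ∀ x y, g (R t x) y = g x (R t y))
    (hSsymm : ∀ x ∈ P, ∀ y ∈ P, g (S x) y = g x (S y))
    (t₀ : ℝ) (ht₀ : t₀ ∈ Icc a b) :
    {x | ∃ J : ℝ → Fin n → ℝ, IsPSSolution g R P S a b J ∧ J t₀ = 0 ∧
        derivWithin J (Icc a b) t₀ = x}
      = {x | ∀ w ∈ solSpace g R P S a b t₀, g x w = 0} := by
  have hg : g.Nondegenerate :=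
    (LinearMap.IsRefl.nondegenerate_iff_separatingLeft fun x y h => (hgsymm y x).trans h).2 hgnd
  obtain ⟨M, hM, hjets⟩ := exists_isLagrangian_jets hab hg hgsymm hRcont hRsymm hSsymm ht₀
  ext x
  calc (∃ J, IsPSSolution g R P S a b J ∧ J t₀ = 0 ∧ derivWithin J (Icc a b) t₀ = x)
      ↔ ((0 : Fin n → ℝ), x) ∈ M := by simp [hjets]
    _ ↔ ∀ u ∈ M, g u.1 x = 0 := hM.mk_zero_mem_iff hg x
    _ ↔ ∀ w ∈ solSpace g R P S a b t₀, g x w = 0 := by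
      simp [solSpace, hjets, hgsymm x]

/-- For every `t₀ ∈ [a,b]`, the set `{J'(t₀) : J a (P,S)-solution with J(t₀) = 0}` equals the
`g`-orthogonal complement of `𝕁[t₀]` in `ℝⁿ`. -/
theorem derivs_of_vanishing_solutions_eq_orthogonal {n : ℕ}
    (g : (Fin n → ℝ) →ₗ[ℝ] (Fin n → ℝ) →ₗ[ℝ] ℝ)
    (R : ℝ → (Fin n → ℝ) →L[ℝ] (Fin n → ℝ))
    (P : Submodule ℝ (Fin n → ℝ)) (S : (Fin n → ℝ) →ₗ[ℝ] (Fin n → ℝ))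
    (a b : ℝ) (hab : a < b)
    (hgsymm : ∀ x y, g x y = g y x)
    (hgnd : ∀ x, (∀ y, g x y = 0) → x = 0)
    (hRcont : ContinuousOn R (Icc a b))
    (hRsymm : ∀ t ∈ Icc a b, ∀ x y, g (R t x) y = g x (R t y))
    (hPnd : ∀ x ∈ P, (∀ y ∈ P, g x y = 0) → x = 0)
    (hSP : ∀ x ∈ P, S x ∈ P)
    (hSsymm : ∀ x ∈ P, ∀ y ∈ P, g (S x) y = g x (S y))
    (t₀ : ℝ) (ht₀ : t₀ ∈ Icc a b) :
    {x | ∃ J : ℝ → Fin n → ℝ, IsPSSolution g R P S a b J ∧ J t₀ = 0 ∧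
        derivWithin J (Icc a b) t₀ = x}
      = {x | ∀ w ∈ solSpace g R P S a b t₀, g x w = 0} :=
  derivs_of_vanishing_solutions_eq_orthogonal_general g R P S a b hab hgsymm hgnd hRcont hRsymm
    hSsymm t₀ ht₀
end

section
/- Let (V,ω) be a real symplectic space of dimension 2n. Then there exists a complex structure on V compatible with ω, i.e. a linear map 𝓘 : V → V with 𝓘 ∘ 𝓘 = −id_V such that the bilinear form (x,y) ↦ ω(𝓘x, y) is symmetric and positive definite on V. -/
/-!
Fix a basis, so that `ω` becomes an invertible skew-symmetric matrix `Ω`. Let `P = |Ω|`, the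
square root of `Ωᵀ Ω = -Ω²`. Being normal, `Ω` commutes with `P`, so `J = P⁻¹ Ω` (the unitary
part of the polar decomposition of `Ω`) satisfies `J² = P⁻² Ω² = -1` and `Jᵀ Ω = P`, which is
positive definite. The endomorphism with matrix `J` is the compatible complex structure.
-/

open scoped Ring

theorem Commute.ringInverse_left {M₀ : Type*} [MonoidWithZero M₀] {a b : M₀} (hb : IsUnit b)
    (h : Commute b a) : Commute b⁻¹ʳ a := by
  obtain ⟨u, rfl⟩ := hb
  rw [Ring.inverse_unit]
  exact h.units_inv_left

section SkewUnit

variable {A : Type*} [Ring A] [StarRing A] [TopologicalSpace A] [Algebra ℝ A]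
  [ContinuousFunctionalCalculus ℝ A IsSelfAdjoint] [PartialOrder A] [StarOrderedRing A]
  [NonnegSpectrumClass ℝ A] [IsTopologicalRing A] [T2Space A]

theorem CFC.isUnit_abs {a : A} (ha : IsUnit a) : IsUnit (CFC.abs a) := by
  rw [← isUnit_pow_iff two_ne_zero, CFC.abs_sq]
  exact ha.star.mul ha

theorem exists_mul_self_eq_neg_one_isStrictlyPositive_star_mul {a : A} (ha : IsUnit a)
    (hskew : star a = -a) : ∃ j : A, j * j = -1 ∧ IsStrictlyPositive (star j * a) := by
  set p := CFC.abs a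
  have hp : IsUnit p := CFC.isUnit_abs ha
  have hpp : p * p = -(a * a) := by rw [CFC.abs_mul_abs, hskew, neg_mul]
  have : IsStarNormal a := ⟨by rw [hskew]; exact (Commute.refl a).neg_left⟩
  have hcomm : Commute p⁻¹ʳ a := (CFC.commute_abs_self a).ringInverse_left hp
  have hstar : star p⁻¹ʳ = p⁻¹ʳ := (CFC.abs_nonneg a).isSelfAdjoint.ringInverse.star_eq
  refine ⟨p⁻¹ʳ * a, ?_, ?_⟩
  · rw [mul_assoc, ← mul_assoc a, ← hcomm.eq, mul_assoc, ← neg_neg (a * a), ← hpp, mul_neg,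
      mul_neg, Ring.inverse_mul_cancel_left _ _ hp, Ring.inverse_mul_cancel _ hp]
  · have hstar_mul : star (p⁻¹ʳ * a) * a = p := by
      rw [star_mul, hstar, hskew, neg_mul, ← hcomm.eq, neg_mul, mul_assoc, ← mul_neg, ← hpp,
        Ring.inverse_mul_cancel_left _ _ hp]
    rw [hstar_mul]
    exact hp.isStrictlyPositive (CFC.abs_nonneg a)

end SkewUnit

open Matrix
open LinearMap (BilinForm)

namespace LinearMap.BilinForm

variable {R V ι : Type*} [CommRing R] [AddCommGroup V] [Module R V] [Fintype ι] [DecidableEq ι]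

theorem toMatrix_transpose_of_isAlt (b : Module.Basis ι R V) {B : BilinForm R V}
    (hB : B.IsAlt) : (toMatrix b B)ᵀ = -toMatrix b B := by
  ext i j
  simp [toMatrix_apply, ← LinearMap.IsAlt.neg hB (b i) (b j)]

theorem isUnit_toMatrix_of_separatingLeft {K : Type*} [Field K] [Module K V]
    (b : Module.Basis ι K V) {B : BilinForm K V} (hB : B.SeparatingLeft) :
    IsUnit (toMatrix b B) := by
  rw [Matrix.isUnit_iff_isUnit_det, isUnit_iff_ne_zero, ← Matrix.separatingLeft_iff_det_ne_zero]
  exact (separatingLeft_toMatrix_iff b).2 hB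

theorem toMatrix_compLeft_toLin (b : Module.Basis ι R V) (B : BilinForm R V)
    (J : Matrix ι ι R) : toMatrix b (B.compLeft (toLin b b J)) = Jᵀ * toMatrix b B := by
  rw [mul_toMatrix, transpose_transpose]

variable [PartialOrder R] [StarRing R] [TrivialStar R]

theorem isSymm_of_posDef_toMatrix (b : Module.Basis ι R V) {B : BilinForm R V}
    (hB : (toMatrix b B).PosDef) : B.IsSymm := by
  rw [← isSymm_toMatrix_iff_isSymm b, ← isHermitian_iff_isSymm]
  exact hB.isHermitian

theorem apply_pos_of_posDef_toMatrix (b : Module.Basis ι R V) {B : BilinForm R V}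
    (hB : (toMatrix b B).PosDef) {x : V} (hx : x ≠ 0) : 0 < B x x := by
  rw [apply_eq_dotProduct_toMatrix_mulVec b]
  simpa only [star_trivial] using hB.dotProduct_mulVec_pos (by simpa using hx)

end LinearMap.BilinForm

open LinearMap.BilinForm
open scoped MatrixOrder

theorem exists_compatible_complex_structure_general
    {V : Type*} [AddCommGroup V] [Module ℝ V] [FiniteDimensional ℝ V]
    (ω : V →ₗ[ℝ] V →ₗ[ℝ] ℝ)
    (halt : ∀ x, ω x x = 0)
    (hnd : ∀ x, (∀ y, ω x y = 0) → x = 0) :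
    ∃ I : V →ₗ[ℝ] V,
      I ∘ₗ I = -LinearMap.id ∧
      (∀ x y : V, ω (I x) y = ω (I y) x) ∧
      (∀ x : V, x ≠ 0 → 0 < ω (I x) x) := by
  let b := Module.finBasis ℝ V
  have hskew : star (toMatrix b ω) = -toMatrix b ω := by
    rw [star_eq_conjTranspose, conjTranspose_eq_transpose_of_trivial,
      toMatrix_transpose_of_isAlt b halt]
  obtain ⟨J, hJJ, hJpos⟩ := exists_mul_self_eq_neg_one_isStrictlyPositive_star_mul
    (isUnit_toMatrix_of_separatingLeft b hnd) hskew
  have hpos : (toMatrix b (compLeft ω (toLin b b J))).PosDef := by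
    rw [toMatrix_compLeft_toLin, ← conjTranspose_eq_transpose_of_trivial]
    exact hJpos.posDef
  refine ⟨toLin b b J, ?_, (isSymm_of_posDef_toMatrix b hpos).eq,
    fun x hx => apply_pos_of_posDef_toMatrix b hpos hx⟩
  rw [← toLin_mul, hJJ, map_neg, toLin_one]

/-- Every symplectic space `(V,ω)` of dimension `2n` admits a compatible complex structure:
a linear map `𝓘 : V → V` with `𝓘 ∘ 𝓘 = -id` such that `ω(𝓘·,·)` is symmetric and positive
definite. -/
theorem exists_compatible_complex_structure
    {V : Type*} [AddCommGroup V] [Module ℝ V] [FiniteDimensional ℝ V]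
    {n : ℕ} (hV : Module.finrank ℝ V = 2 * n)
    (ω : V →ₗ[ℝ] V →ₗ[ℝ] ℝ)
    (halt : ∀ x, ω x x = 0)
    (hnd : ∀ x, (∀ y, ω x y = 0) → x = 0) :
    ∃ I : V →ₗ[ℝ] V,
      I ∘ₗ I = -LinearMap.id ∧
      (∀ x y : V, ω (I x) y = ω (I y) x) ∧
      (∀ x : V, x ≠ 0 → 0 < ω (I x) x) :=
  exists_compatible_complex_structure_general ω halt hnd
end
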